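/- arXiv:2206.06626 — 10 statements merged into one kernel-verified Lean document; each statement's English description precedes it below -/
import Mathlib

section
/- Let g be an automorphism of a finite thick generalized quadrangle S of order (s,t), let P_g and L_g be the sets of points and lines fixed by g, and let S_g be the incidence structure induced on (P_g, L_g). If |P_g| ≥ 2 and |L_g| ≥ 2, and S_g admits a group H of automorphisms acting transitively on P_g and transitively on L_g, then there exist integers s', t' ≥ 1 such that S_g is a generalized quadrangle of order (s', t'). -/
/-- A generalized quadrangle of order `(s, t)` given by an incidence relation `inc`
between points `P` and lines `L`. -/
structure IsGenQuadrangle {P L : Type*} (inc : P → L → Prop) (s t : ℕ) : Prop where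
  /-- every line is incident with exactly `s + 1` points -/
  pts_per_line : ∀ ℓ : L, Nat.card {x : P // inc x ℓ} = s + 1
  /-- every point is incident with exactly `t + 1` lines -/
  lines_per_pt : ∀ x : P, Nat.card {ℓ : L // inc x ℓ} = t + 1
  /-- two distinct points are incident with at most one common line -/
  unique_line : ∀ ⦃x y : P⦄, x ≠ y → ∀ ⦃ℓ m : L⦄,
      inc x ℓ → inc y ℓ → inc x m → inc y m → ℓ = m
  /-- for a nonincident point-line pair `(x, ℓ)` there is a unique pair `(y, m)`
  with `x I m`, `y I m` and `y I ℓ` -/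
  proj : ∀ ⦃x : P⦄ ⦃ℓ : L⦄, ¬ inc x ℓ →
      ∃! p : P × L, inc x p.2 ∧ inc p.1 p.2 ∧ inc p.1 ℓ

/-!
The projection of a fixed point onto a fixed line is unique, hence fixed by the
automorphism; so the fixed substructure satisfies axioms (2) and (3), and only
regularity is missing, which transitivity of `H` on fixed points and on fixed lines
provides. A line with a single point is impossible: projecting a point off it gives a
line with two points, and all lines carry equally many points. Dually for points.
-/

/-- Axioms (2) and (3) of a generalized quadrangle, without the counting conditions. -/
structure IsGenQuadrangleAxioms {P L : Type*} (inc : P → L → Prop) : Prop where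
  unique_line : ∀ ⦃x y : P⦄, x ≠ y → ∀ ⦃ℓ m : L⦄,
      inc x ℓ → inc y ℓ → inc x m → inc y m → ℓ = m
  proj : ∀ ⦃x : P⦄ ⦃ℓ : L⦄, ¬ inc x ℓ →
      ∃! p : P × L, inc x p.2 ∧ inc p.1 p.2 ∧ inc p.1 ℓ

section

variable {P L : Type*} {inc : P → L → Prop}

theorem IsGenQuadrangle.isGenQuadrangleAxioms {s t : ℕ} (hQ : IsGenQuadrangle inc s t) :
    IsGenQuadrangleAxioms inc :=
  ⟨hQ.unique_line, hQ.proj⟩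

namespace IsGenQuadrangleAxioms

theorem isGenQuadrangle (hQ : IsGenQuadrangleAxioms inc) {s t : ℕ}
    (hpts : ∀ ℓ : L, Nat.card {x : P // inc x ℓ} = s + 1)
    (hlines : ∀ x : P, Nat.card {ℓ : L // inc x ℓ} = t + 1) :
    IsGenQuadrangle inc s t :=
  ⟨hpts, hlines, hQ.unique_line, hQ.proj⟩

protected theorem flip (hQ : IsGenQuadrangleAxioms inc) :
    IsGenQuadrangleAxioms (flip inc) where
  unique_line ℓ m hℓm x y hxℓ hxm hyℓ hym := by
    by_contra hxy
    exact hℓm (hQ.unique_line hxy hxℓ hyℓ hxm hym)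
  proj ℓ x hxℓ := by
    obtain ⟨⟨y, m⟩, hym, huniq⟩ := hQ.proj hxℓ
    refine ⟨(m, y), ⟨hym.2.2, hym.2.1, hym.1⟩, fun ⟨m', y'⟩ h => ?_⟩
    have := huniq (y', m') ⟨h.2.2, h.2.1, h.1⟩
    simp_all

theorem induced (hQ : IsGenQuadrangleAxioms inc) (p : P → Prop) (q : L → Prop)
    (hclosed : ∀ ⦃x : P⦄ ⦃ℓ : L⦄, p x → q ℓ → ¬ inc x ℓ →
      ∀ ⦃y : P⦄ ⦃m : L⦄, inc x m → inc y m → inc y ℓ → p y ∧ q m) :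
    IsGenQuadrangleAxioms (fun (x : {x // p x}) (ℓ : {ℓ // q ℓ}) => inc x.1 ℓ.1) where
  unique_line x y hxy ℓ m hxℓ hyℓ hxm hym :=
    Subtype.ext (hQ.unique_line (Subtype.coe_ne_coe.mpr hxy) hxℓ hyℓ hxm hym)
  proj x ℓ hxℓ := by
    obtain ⟨⟨y, m⟩, hym, huniq⟩ := hQ.proj hxℓ
    obtain ⟨hy, hm⟩ := hclosed x.2 ℓ.2 hxℓ hym.1 hym.2.1 hym.2.2
    refine ⟨(⟨y, hy⟩, ⟨m, hm⟩), hym, fun ⟨y', m'⟩ h => ?_⟩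
    have := huniq (y'.1, m'.1) h
    simp only [Prod.mk.injEq] at this
    ext <;> simp [this]

theorem induced_fixed (hQ : IsGenQuadrangleAxioms inc) (σ : P → P) (τ : L → L)
    (hσ : ∀ x ℓ, inc x ℓ → inc (σ x) (τ ℓ)) :
    IsGenQuadrangleAxioms
      (fun (x : {x : P // σ x = x}) (ℓ : {ℓ : L // τ ℓ = ℓ}) => inc x.1 ℓ.1) := by
  refine hQ.induced _ _ fun x ℓ hx hℓ hxℓ y m hxm hym hyℓ => ?_
  obtain ⟨_, -, huniq⟩ := hQ.proj hxℓ
  have hσy : inc (σ y) ℓ := hℓ ▸ hσ y ℓ hyℓ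
  have hτm : inc x (τ m) := hx ▸ hσ x m hxm
  exact Prod.mk.inj <|
    (huniq (σ y, τ m) ⟨hτm, hσ y m hym, hσy⟩).trans (huniq (y, m) ⟨hxm, hym, hyℓ⟩).symm

theorem exists_line_with_two_points (hQ : IsGenQuadrangleAxioms inc) [Nontrivial P]
    (ℓ : L) : ∃ m : L, ∃ x y : P, x ≠ y ∧ inc x m ∧ inc y m := by
  by_cases hall : ∀ x, inc x ℓ
  · obtain ⟨x, y, hxy⟩ := exists_pair_ne P
    exact ⟨ℓ, x, y, hxy, hall x, hall y⟩
  · push Not at hall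
    obtain ⟨x, hxℓ⟩ := hall
    obtain ⟨⟨y, m⟩, ⟨hxm, hym, hyℓ⟩, -⟩ := hQ.proj hxℓ
    exact ⟨m, x, y, fun h => hxℓ (h ▸ hyℓ), hxm, hym⟩

theorem two_le_card_inc (hQ : IsGenQuadrangleAxioms inc) [Finite P] [Nontrivial P]
    (hconst : ∀ ℓ m : L, Nat.card {x // inc x ℓ} = Nat.card {x // inc x m}) (ℓ : L) :
    2 ≤ Nat.card {x // inc x ℓ} := by
  obtain ⟨m, x, y, hxy, hxm, hym⟩ := hQ.exists_line_with_two_points ℓ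
  rw [hconst ℓ m]
  exact Finite.one_lt_card_iff_nontrivial.mpr
    ⟨⟨⟨x, hxm⟩, ⟨y, hym⟩, fun h => hxy (congrArg Subtype.val h)⟩⟩

end IsGenQuadrangleAxioms

theorem card_inc_eq_of_isPretransitive (H : Type*) [Group H] [MulAction H P]
    [MulAction H L] (hpres : ∀ (h : H) (x : P) (ℓ : L), inc (h • x) (h • ℓ) ↔ inc x ℓ)
    [MulAction.IsPretransitive H L] (ℓ m : L) :
    Nat.card {x // inc x ℓ} = Nat.card {x // inc x m} := by
  obtain ⟨h, rfl⟩ := MulAction.exists_smul_eq H ℓ m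
  exact Nat.card_congr <| (MulAction.toPerm h).subtypeEquiv fun x => (hpres h x ℓ).symm

theorem IsGenQuadrangleAxioms.exists_isGenQuadrangle_of_isPretransitive
    (hQ : IsGenQuadrangleAxioms inc) [Finite P] [Finite L] [Nontrivial P] [Nontrivial L]
    (H : Type*) [Group H] [MulAction H P] [MulAction H L]
    (hpres : ∀ (h : H) (x : P) (ℓ : L), inc (h • x) (h • ℓ) ↔ inc x ℓ)
    [MulAction.IsPretransitive H P] [MulAction.IsPretransitive H L] :
    ∃ s t : ℕ, 1 ≤ s ∧ 1 ≤ t ∧ IsGenQuadrangle inc s t := by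
  have hpts := card_inc_eq_of_isPretransitive H hpres
  have hlines := card_inc_eq_of_isPretransitive (inc := flip inc) H fun h ℓ x => hpres h x ℓ
  obtain ⟨ℓ₀⟩ : Nonempty L := inferInstance
  obtain ⟨x₀⟩ : Nonempty P := inferInstance
  have h2pts := hQ.two_le_card_inc hpts ℓ₀
  have h2lines := hQ.flip.two_le_card_inc hlines x₀
  refine ⟨_, _, Nat.le_sub_one_of_lt h2pts, Nat.le_sub_one_of_lt h2lines,
    hQ.isGenQuadrangle (fun ℓ => ?_) (fun x => ?_)⟩
  · rw [hpts ℓ ℓ₀]; omega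
  · exact (hlines x x₀).trans (by omega)

end

theorem stmt2_general {P L : Type*} {inc : P → L → Prop} {s t : ℕ}
    (hGQ : IsGenQuadrangle inc s t)
    (σ : Equiv.Perm P) (τ : Equiv.Perm L)
    (hpres : ∀ (x : P) (ℓ : L), inc (σ x) (τ ℓ) ↔ inc x ℓ)
    (h2P : 2 ≤ Nat.card {x : P // σ x = x})
    (h2L : 2 ≤ Nat.card {ℓ : L // τ ℓ = ℓ})
    (H : Type*) [Group H]
    [MulAction H {x : P // σ x = x}] [MulAction H {ℓ : L // τ ℓ = ℓ}]
    (hpresH : ∀ (h : H) (x : {x : P // σ x = x}) (ℓ : {ℓ : L // τ ℓ = ℓ}),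
        inc (h • x).1 (h • ℓ).1 ↔ inc x.1 ℓ.1)
    (htransP : MulAction.IsPretransitive H {x : P // σ x = x})
    (htransL : MulAction.IsPretransitive H {ℓ : L // τ ℓ = ℓ}) :
    ∃ s' t' : ℕ, 1 ≤ s' ∧ 1 ≤ t' ∧
      IsGenQuadrangle
        (fun (x : {x : P // σ x = x}) (ℓ : {ℓ : L // τ ℓ = ℓ}) => inc x.1 ℓ.1) s' t' := by
  have : Finite {x : P // σ x = x} := Nat.finite_of_card_ne_zero (by omega)
  have : Finite {ℓ : L // τ ℓ = ℓ} := Nat.finite_of_card_ne_zero (by omega)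
  have : Nontrivial {x : P // σ x = x} := Finite.one_lt_card_iff_nontrivial.mp h2P
  have : Nontrivial {ℓ : L // τ ℓ = ℓ} := Finite.one_lt_card_iff_nontrivial.mp h2L
  exact (hGQ.isGenQuadrangleAxioms.induced_fixed σ τ fun x ℓ => (hpres x ℓ).mpr)
    |>.exists_isGenQuadrangle_of_isPretransitive H hpresH

/-- If an automorphism `(σ, τ)` of a finite thick GQ of order `(s, t)` fixes at least
two points and at least two lines, and the induced fixed substructure admits a group of
automorphisms transitive on fixed points and on fixed lines, then the fixed substructure
is a generalized quadrangle of some order `(s', t')` with `s', t' ≥ 1`. -/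
theorem stmt2 {P L : Type*} [Finite P] [Finite L] {inc : P → L → Prop} {s t : ℕ}
    (hGQ : IsGenQuadrangle inc s t) (hs : 2 ≤ s) (ht : 2 ≤ t)
    (σ : Equiv.Perm P) (τ : Equiv.Perm L)
    (hpres : ∀ (x : P) (ℓ : L), inc (σ x) (τ ℓ) ↔ inc x ℓ)
    (h2P : 2 ≤ Nat.card {x : P // σ x = x})
    (h2L : 2 ≤ Nat.card {ℓ : L // τ ℓ = ℓ})
    (H : Type*) [Group H]
    [MulAction H {x : P // σ x = x}] [MulAction H {ℓ : L // τ ℓ = ℓ}]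
    (hpresH : ∀ (h : H) (x : {x : P // σ x = x}) (ℓ : {ℓ : L // τ ℓ = ℓ}),
        inc (h • x).1 (h • ℓ).1 ↔ inc x.1 ℓ.1)
    (htransP : MulAction.IsPretransitive H {x : P // σ x = x})
    (htransL : MulAction.IsPretransitive H {ℓ : L // τ ℓ = ℓ}) :
    ∃ s' t' : ℕ, 1 ≤ s' ∧ 1 ≤ t' ∧
      IsGenQuadrangle
        (fun (x : {x : P // σ x = x}) (ℓ : {ℓ : L // τ ℓ = ℓ}) => inc x.1 ℓ.1) s' t' :=
  stmt2_general hGQ σ τ hpres h2P h2L H hpresH htransP htransL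
end

section
/- Let g be an automorphism of a finite thick generalized quadrangle S of order (s,t), let P_g and L_g be the sets of points and lines fixed by g, and let S_g be the incidence structure induced on (P_g, L_g). If |P_g| = |L_g| ≥ 2 and S_g admits a group H of automorphisms acting transitively on P_g, then there exist integers s', t' ≥ 1 such that S_g is a generalized quadrangle of order (s', t'). -/
/-!
The fixed substructure inherits axioms (2) and (3): the projection of a fixed point onto a fixed
line is unique, hence fixed. By transitivity every fixed point lies on the same number `a` of
fixed lines, and double counting flags with `|P_g| = |L_g|` makes `a` the average number of
points on a line. Projection is a bijection between disjoint lines, so they carry equally many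
points. A line with a single point would leave too few flags, so lines carry at least two points.
If `a ≥ 3`, any two meeting lines are linked by a chain of disjoint lines; if `a = 2`, the
average forces every line to carry exactly two points. Either way `S_g` has order `(a-1, a-1)`.
-/

open Finset

theorem sum_card_incident_points_eq_sum_card_incident_lines {P L : Type*} [Fintype P]
    [Fintype L] {inc : P → L → Prop} :
    ∑ ℓ : L, Nat.card {x // inc x ℓ} = ∑ x : P, Nat.card {ℓ // inc x ℓ} := by
  classical
  simp only [Nat.card_eq_fintype_card, Fintype.card_subtype, card_filter]
  exact sum_comm

theorem card_incident_lines_eq_of_isPretransitive {X Y : Type*} {r : X → Y → Prop}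
    (H : Type*) [Group H] [MulAction H X] [MulAction H Y] [MulAction.IsPretransitive H X]
    (hr : ∀ (h : H) x ℓ, r (h • x) (h • ℓ) ↔ r x ℓ) (x y : X) :
    Nat.card {ℓ // r x ℓ} = Nat.card {ℓ // r y ℓ} := by
  obtain ⟨h, rfl⟩ := MulAction.exists_smul_eq H x y
  exact Nat.card_congr (Equiv.subtypeEquiv (MulAction.toPerm h) fun ℓ => (hr h x ℓ).symm)

theorem exists_notMem_of_card_lt {α : Type*} [Finite α] {p : α → Prop} {s : Finset α}
    (h : #s < Nat.card {x // p x}) : ∃ x, p x ∧ x ∉ s := by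
  by_contra! hs
  have hcard : Nat.card {x // p x} = {x | p x}.ncard := Nat.card_coe_set_eq _
  have := Set.ncard_le_ncard (s := {x | p x}) (t := (s : Set α)) hs
  rw [Set.ncard_coe_finset] at this
  omega

/-- Axioms (2) and (3) of a generalized quadrangle; no order is prescribed. -/
structure IsWeakGenQuadrangle {P L : Type*} (inc : P → L → Prop) : Prop where
  unique_line : ∀ ⦃x y : P⦄, x ≠ y → ∀ ⦃ℓ m : L⦄,
      inc x ℓ → inc y ℓ → inc x m → inc y m → ℓ = m
  proj : ∀ ⦃x : P⦄ ⦃ℓ : L⦄, ¬ inc x ℓ →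
      ∃! p : P × L, inc x p.2 ∧ inc p.1 p.2 ∧ inc p.1 ℓ

theorem IsGenQuadrangle.isWeakGenQuadrangle {P L : Type*} {inc : P → L → Prop} {s t : ℕ}
    (hQ : IsGenQuadrangle inc s t) : IsWeakGenQuadrangle inc :=
  ⟨hQ.unique_line, hQ.proj⟩

namespace IsWeakGenQuadrangle

variable {P L : Type*} {inc : P → L → Prop}

theorem fixedPoints (hQ : IsWeakGenQuadrangle inc) (σ : Equiv.Perm P) (τ : Equiv.Perm L)
    (hpres : ∀ x ℓ, inc (σ x) (τ ℓ) ↔ inc x ℓ) :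
    IsWeakGenQuadrangle
      (fun (x : {x : P // σ x = x}) (ℓ : {ℓ : L // τ ℓ = ℓ}) => inc x.1 ℓ.1) where
  unique_line x y hxy ℓ m hxℓ hyℓ hxm hym :=
    Subtype.ext (hQ.unique_line (Subtype.coe_ne_coe.mpr hxy) hxℓ hyℓ hxm hym)
  proj := by
    rintro ⟨x, hx⟩ ⟨ℓ, hℓ⟩ hxℓ
    obtain ⟨⟨y, m⟩, hym, hunique⟩ := hQ.proj hxℓ
    -- the image of the projection under `(σ, τ)` is again a projection, hence equal to it
    have hfix : (σ y, τ m) = (y, m) := hunique _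
      ⟨by simpa only [hx] using (hpres x m).mpr hym.1, (hpres y m).mpr hym.2.1,
        by simpa only [hℓ] using (hpres y ℓ).mpr hym.2.2⟩
    refine ⟨(⟨y, congrArg Prod.fst hfix⟩, ⟨m, congrArg Prod.snd hfix⟩), hym, ?_⟩
    rintro ⟨⟨y', hy'⟩, ⟨m', hm'⟩⟩ hym'
    obtain ⟨rfl, rfl⟩ := Prod.ext_iff.mp (hunique (y', m') hym')
    rfl

theorem proj_eq (hQ : IsWeakGenQuadrangle inc) {z w₁ w₂ : P} {ℓ m₁ m₂ : L}
    (hz : ¬ inc z ℓ)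
    (h₁ : inc z m₁ ∧ inc w₁ m₁ ∧ inc w₁ ℓ) (h₂ : inc z m₂ ∧ inc w₂ m₂ ∧ inc w₂ ℓ) :
    w₁ = w₂ ∧ m₁ = m₂ :=
  Prod.ext_iff.mp ((hQ.proj hz).unique (y₁ := (w₁, m₁)) (y₂ := (w₂, m₂)) h₁ h₂)

/-- There are no triangles: lines `g ∋ y` and `m ∋ z` through distinct points of a line `e`
do not meet unless one of them is `e`. -/
theorem disjoint_of_mem_line (hQ : IsWeakGenQuadrangle inc) {y z u : P} {e g m : L}
    (hzy : z ≠ y) (hye : inc y e) (hze : inc z e) (hyg : inc y g) (hzm : inc z m)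
    (hge : g ≠ e) (hme : m ≠ e) :
    ¬ (inc u g ∧ inc u m) := by
  rintro ⟨hug, hum⟩
  have hzg : ¬ inc z g := fun hzg => hge (hQ.unique_line hzy hzg hyg hze hye)
  exact hme (hQ.proj_eq hzg ⟨hze, hye, hyg⟩ ⟨hzm, hum, hug⟩).2.symm

theorem card_incident_points_le_of_disjoint [Finite P] (hQ : IsWeakGenQuadrangle inc)
    {ℓ m : L} (hdisj : ∀ u, ¬ (inc u ℓ ∧ inc u m)) :
    Nat.card {x // inc x ℓ} ≤ Nat.card {x // inc x m} := by
  have hproj : ∀ x : {x // inc x ℓ}, ∃ w : {w // inc w m}, ∃ e, inc x.1 e ∧ inc w.1 e := by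
    rintro ⟨x, hxℓ⟩
    obtain ⟨⟨w, e⟩, ⟨hxe, hwe, hwm⟩, -⟩ := hQ.proj fun hxm => hdisj x ⟨hxℓ, hxm⟩
    exact ⟨⟨w, hwm⟩, e, hxe, hwe⟩
  choose f e hxe hwe using hproj
  refine Nat.card_le_card_of_injective f fun x₁ x₂ hf => Subtype.ext ?_
  have hwℓ : ¬ inc (f x₁).1 ℓ := fun h => hdisj _ ⟨h, (f x₁).2⟩
  exact (hQ.proj_eq hwℓ ⟨hwe x₁, hxe x₁, x₁.2⟩ ⟨hf ▸ hwe x₂, hxe x₂, x₂.2⟩).1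

theorem card_incident_points_eq_of_disjoint [Finite P] (hQ : IsWeakGenQuadrangle inc)
    {ℓ m : L} (hdisj : ∀ u, ¬ (inc u ℓ ∧ inc u m)) :
    Nat.card {x // inc x ℓ} = Nat.card {x // inc x m} :=
  (hQ.card_incident_points_le_of_disjoint hdisj).antisymm
    (hQ.card_incident_points_le_of_disjoint fun u hu => hdisj u hu.symm)

theorem exists_incident_point [Nonempty P] (hQ : IsWeakGenQuadrangle inc) (ℓ : L) :
    ∃ y, inc y ℓ := by
  obtain ⟨x⟩ := ‹Nonempty P›
  by_cases hxℓ : inc x ℓ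
  · exact ⟨x, hxℓ⟩
  · obtain ⟨⟨y, _⟩, ⟨-, -, hyℓ⟩, -⟩ := hQ.proj hxℓ
    exact ⟨y, hyℓ⟩

theorem two_le_card_incident_lines [Finite L] (hQ : IsWeakGenQuadrangle inc) {a : ℕ}
    (hPL : Nat.card P = Nat.card L) (h2 : 2 ≤ Nat.card P)
    (ha : ∀ x, Nat.card {ℓ // inc x ℓ} = a) : 2 ≤ a := by
  obtain ⟨x⟩ : Nonempty P := (Nat.card_pos_iff.mp (by omega)).1
  by_cases hall : ∃ y ℓ, ¬ inc y ℓ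
  · obtain ⟨y, ℓ, hyℓ⟩ := hall
    obtain ⟨⟨w, m⟩, ⟨hym, hwm, hwℓ⟩, -⟩ := hQ.proj hyℓ
    have hmℓ : (⟨m, hwm⟩ : {ℓ // inc w ℓ}) ≠ ⟨ℓ, hwℓ⟩ := by
      rintro ⟨⟩
      exact hyℓ hym
    rw [← ha w]
    exact Finite.one_lt_card_iff_nontrivial.mpr ⟨_, _, hmℓ⟩
  · simp only [not_exists, not_not] at hall
    rw [← ha x, Nat.card_congr (Equiv.subtypeUnivEquiv (hall x))]
    omega

theorem exists_line_of_single_point (hQ : IsWeakGenQuadrangle inc) {y x : P} {ℓ : L}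
    (hℓ : ∀ x, inc x ℓ ↔ x = y) (hxy : x ≠ y) : ∃ m, inc x m ∧ inc y m := by
  obtain ⟨⟨w, m⟩, ⟨hxm, hwm, hwℓ⟩, -⟩ := hQ.proj fun hxℓ => hxy ((hℓ x).mp hxℓ)
  exact ⟨m, hxm, (hℓ w).mp hwℓ ▸ hwm⟩

theorem eq_of_single_point (hQ : IsWeakGenQuadrangle inc) {y u v : P}
    {ℓ f : L} (hℓ : ∀ x, inc x ℓ ↔ x = y) (hyf : ¬ inc y f) (huf : inc u f)
    (hvf : inc v f) : u = v := by
  obtain ⟨m, hum, hym⟩ := hQ.exists_line_of_single_point hℓ fun h => hyf (h ▸ huf)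
  obtain ⟨n, hvn, hyn⟩ := hQ.exists_line_of_single_point hℓ fun h => hyf (h ▸ hvf)
  exact (hQ.proj_eq hyf ⟨hym, hum, huf⟩ ⟨hyn, hvn, hvf⟩).1

theorem exists_line_forall_ne_subsingleton [Finite L] (hQ : IsWeakGenQuadrangle inc)
    {y x : P} {ℓ : L} (hℓ : ∀ x, inc x ℓ ↔ x = y) (hxy : x ≠ y)
    (hx : 2 ≤ Nat.card {ℓ // inc x ℓ}) :
    ∃ m, ∀ f ≠ m, ∀ ⦃u v⦄, inc u f → inc v f → u = v := by
  obtain ⟨m, hxm, hym⟩ := hQ.exists_line_of_single_point hℓ hxy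
  obtain ⟨e, hxe, hem⟩ := exists_notMem_of_card_lt (s := {m}) (by rwa [card_singleton])
  have hye : ¬ inc y e := fun hye =>
    hem (mem_singleton.mpr (hQ.unique_line hxy hxe hye hxm hym))
  have he : ∀ v, inc v e ↔ v = x := fun v =>
    ⟨fun hve => hQ.eq_of_single_point hℓ hye hve hxe, fun h => h ▸ hxe⟩
  refine ⟨m, fun f hfm u v huf hvf => ?_⟩
  by_cases hyf : inc y f
  · have hxf : ¬ inc x f := fun hxf => hfm (hQ.unique_line hxy hxf hyf hxm hym)
    exact hQ.eq_of_single_point he hxf huf hvf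
  · exact hQ.eq_of_single_point hℓ hyf huf hvf

/-- If `ℓ = {y}` then lines avoiding `y` have at most one point, and so do lines through `y`
avoiding a second point `x`; only the line `xy` can carry more than one point, which leaves
fewer than `2 |P|` flags. -/
theorem two_le_card_incident_points [Fintype P] [Fintype L] (hQ : IsWeakGenQuadrangle inc)
    {a : ℕ} (hPL : Nat.card P = Nat.card L) (h2 : 2 ≤ Nat.card P)
    (ha : ∀ x, Nat.card {ℓ // inc x ℓ} = a) (ℓ : L) : 2 ≤ Nat.card {x // inc x ℓ} := by
  classical
  have : Nonempty P := (Nat.card_pos_iff.mp (by omega)).1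
  obtain ⟨y, hyℓ⟩ := hQ.exists_incident_point ℓ
  by_contra! hℓ1
  have : Subsingleton {x // inc x ℓ} := Finite.card_le_one_iff_subsingleton.mp (by omega)
  have hℓ : ∀ x, inc x ℓ ↔ x = y := fun x =>
    ⟨fun hxℓ => congrArg Subtype.val (Subsingleton.elim (α := {x // inc x ℓ}) ⟨x, hxℓ⟩ ⟨y, hyℓ⟩),
      fun h => h ▸ hyℓ⟩
  have ha2 := hQ.two_le_card_incident_lines hPL h2 ha
  simp only [Nat.card_eq_fintype_card] at hPL h2
  obtain ⟨x, hxy⟩ := Fintype.exists_ne_of_one_lt_card h2 y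
  obtain ⟨m, hm⟩ := hQ.exists_line_forall_ne_subsingleton hℓ hxy (ha x ▸ ha2)
  have hsmall : ∀ f ∈ univ.erase m, Nat.card {x // inc x f} ≤ 1 := fun f hf =>
    Finite.card_le_one_iff_subsingleton.mpr
      ⟨fun u v => Subtype.ext (hm f (ne_of_mem_erase hf) u.2 v.2)⟩
  have hflags : ∑ f, Nat.card {x // inc x f} = Fintype.card P * a := by
    simp only [sum_card_incident_points_eq_sum_card_incident_lines, ha, sum_const, card_univ,
      smul_eq_mul]
  have hbound : ∑ f, Nat.card {x // inc x f} ≤ Fintype.card P + (Fintype.card L - 1) := by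
    rw [← add_sum_erase _ _ (mem_univ m)]
    gcongr
    · simpa only [Nat.card_eq_fintype_card] using Finite.card_subtype_le (inc · m)
    · simpa [card_erase_of_mem] using sum_le_card_nsmul _ _ 1 hsmall
  have hmul := Nat.mul_le_mul_left (Fintype.card P) ha2
  omega

/-- Through a common point `y` of `e` and `f` passes a third line `g`, which is disjoint from
a line `m` meeting `e` outside `y` and from a line `n` meeting `f` outside `y`; the line `m`
is disjoint from `f` and `n` from `e`. -/
theorem card_incident_points_eq_of_three_le [Finite P] [Finite L]
    (hQ : IsWeakGenQuadrangle inc) (hK : ∀ ℓ, 2 ≤ Nat.card {x // inc x ℓ})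
    (hdeg : ∀ x, 3 ≤ Nat.card {ℓ // inc x ℓ}) (e f : L) :
    Nat.card {x // inc x e} = Nat.card {x // inc x f} := by
  classical
  by_cases hmeet : ∃ y, inc y e ∧ inc y f
  swap
  · exact hQ.card_incident_points_eq_of_disjoint fun u hu => hmeet ⟨u, hu⟩
  obtain ⟨y, hye, hyf⟩ := hmeet
  rcases eq_or_ne e f with rfl | hef
  · rfl
  obtain ⟨z, hze, hzy⟩ := exists_notMem_of_card_lt (s := {y})
    (by rw [card_singleton]; exact hK e)
  obtain ⟨w, hwf, hwy⟩ := exists_notMem_of_card_lt (s := {y})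
    (by rw [card_singleton]; exact hK f)
  obtain ⟨m, hzm, hme⟩ := exists_notMem_of_card_lt (s := {e})
    (by rw [card_singleton]; linarith [hdeg z])
  obtain ⟨n, hwn, hnf⟩ := exists_notMem_of_card_lt (s := {f})
    (by rw [card_singleton]; linarith [hdeg w])
  obtain ⟨g, hyg, hg⟩ := exists_notMem_of_card_lt (s := {e, f})
    (card_le_two.trans_lt (hdeg y))
  rw [mem_singleton] at hzy hwy hme hnf
  simp only [mem_insert, mem_singleton, not_or] at hg
  calc Nat.card {x // inc x e}
      = Nat.card {x // inc x n} := hQ.card_incident_points_eq_of_disjoint fun _ =>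
        hQ.disjoint_of_mem_line hwy hyf hwf hye hwn hef hnf
    _ = Nat.card {x // inc x g} := (hQ.card_incident_points_eq_of_disjoint fun _ =>
        hQ.disjoint_of_mem_line hwy hyf hwf hyg hwn hg.2 hnf).symm
    _ = Nat.card {x // inc x m} := hQ.card_incident_points_eq_of_disjoint fun _ =>
        hQ.disjoint_of_mem_line hzy hye hze hyg hzm hg.1 hme
    _ = Nat.card {x // inc x f} := (hQ.card_incident_points_eq_of_disjoint fun _ =>
        hQ.disjoint_of_mem_line hzy hye hze hyf hzm hef.symm hme).symm

/-- Double counting flags, the average number of points on a line is `a`. -/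
theorem card_incident_points_eq [Finite P] [Finite L] (hQ : IsWeakGenQuadrangle inc) {a : ℕ}
    (hPL : Nat.card P = Nat.card L) (h2 : 2 ≤ Nat.card P)
    (ha : ∀ x, Nat.card {ℓ // inc x ℓ} = a) (ℓ : L) : Nat.card {x // inc x ℓ} = a := by
  cases nonempty_fintype P
  cases nonempty_fintype L
  have : Nonempty L := (Nat.card_pos_iff.mp (by omega)).1
  have hK := hQ.two_le_card_incident_points hPL h2 ha
  have hsum : ∑ f : L, Nat.card {x // inc x f} = ∑ _f : L, a := by
    simp only [sum_card_incident_points_eq_sum_card_incident_lines, ha, sum_const, card_univ,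
      ← Nat.card_eq_fintype_card, hPL]
  rcases (hQ.two_le_card_incident_lines hPL h2 ha).eq_or_lt with rfl | ha3
  · exact ((sum_eq_sum_iff_of_le fun f _ => hK f).mp hsum.symm ℓ (mem_univ ℓ)).symm
  · have hconst : ∀ f, Nat.card {x // inc x f} = Nat.card {x // inc x ℓ} := fun f =>
      hQ.card_incident_points_eq_of_three_le hK (fun x => ha x ▸ ha3) f ℓ
    simp only [hconst, sum_const, card_univ, smul_eq_mul] at hsum
    exact Nat.eq_of_mul_eq_mul_left Fintype.card_pos hsum

theorem isGenQuadrangle [Finite P] [Finite L] (hQ : IsWeakGenQuadrangle inc) {a : ℕ}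
    (hPL : Nat.card P = Nat.card L) (h2 : 2 ≤ Nat.card P)
    (ha : ∀ x, Nat.card {ℓ // inc x ℓ} = a) : IsGenQuadrangle inc (a - 1) (a - 1) := by
  have ha2 := hQ.two_le_card_incident_lines hPL h2 ha
  refine ⟨fun ℓ => ?_, fun x => ?_, hQ.unique_line, hQ.proj⟩
  · rw [hQ.card_incident_points_eq hPL h2 ha ℓ]
    omega
  · rw [ha x]
    omega

end IsWeakGenQuadrangle

theorem stmt3_general {P L : Type*} [Finite P] [Finite L] {inc : P → L → Prop} {s t : ℕ}
    (hGQ : IsGenQuadrangle inc s t)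
    (σ : Equiv.Perm P) (τ : Equiv.Perm L)
    (hpres : ∀ (x : P) (ℓ : L), inc (σ x) (τ ℓ) ↔ inc x ℓ)
    (hcard : Nat.card {x : P // σ x = x} = Nat.card {ℓ : L // τ ℓ = ℓ})
    (h2P : 2 ≤ Nat.card {x : P // σ x = x})
    (H : Type*) [Group H]
    [MulAction H {x : P // σ x = x}] [MulAction H {ℓ : L // τ ℓ = ℓ}]
    (hpresH : ∀ (h : H) (x : {x : P // σ x = x}) (ℓ : {ℓ : L // τ ℓ = ℓ}),
        inc (h • x).1 (h • ℓ).1 ↔ inc x.1 ℓ.1)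
    (htransP : MulAction.IsPretransitive H {x : P // σ x = x}) :
    ∃ s' t' : ℕ, 1 ≤ s' ∧ 1 ≤ t' ∧
      IsGenQuadrangle
        (fun (x : {x : P // σ x = x}) (ℓ : {ℓ : L // τ ℓ = ℓ}) => inc x.1 ℓ.1) s' t' := by
  have hQ := hGQ.isWeakGenQuadrangle.fixedPoints σ τ hpres
  obtain ⟨x₀⟩ : Nonempty {x : P // σ x = x} := (Nat.card_pos_iff.mp (by omega)).1
  have ha := fun x => card_incident_lines_eq_of_isPretransitive
    (r := fun (x : {x : P // σ x = x}) (ℓ : {ℓ : L // τ ℓ = ℓ}) => inc x.1 ℓ.1)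
    H hpresH x x₀
  have ha2 := hQ.two_le_card_incident_lines hcard h2P ha
  exact ⟨_, _, by omega, by omega, hQ.isGenQuadrangle hcard h2P ha⟩

/-- If an automorphism `(σ, τ)` of a finite thick GQ of order `(s, t)` fixes equally
many points and lines, at least two of each, and the induced fixed substructure admits a
group of automorphisms transitive on the fixed points, then the fixed substructure is a
generalized quadrangle of some order `(s', t')` with `s', t' ≥ 1`. -/
theorem stmt3 {P L : Type*} [Finite P] [Finite L] {inc : P → L → Prop} {s t : ℕ}
    (hGQ : IsGenQuadrangle inc s t) (hs : 2 ≤ s) (ht : 2 ≤ t)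
    (σ : Equiv.Perm P) (τ : Equiv.Perm L)
    (hpres : ∀ (x : P) (ℓ : L), inc (σ x) (τ ℓ) ↔ inc x ℓ)
    (hcard : Nat.card {x : P // σ x = x} = Nat.card {ℓ : L // τ ℓ = ℓ})
    (h2P : 2 ≤ Nat.card {x : P // σ x = x})
    (H : Type*) [Group H]
    [MulAction H {x : P // σ x = x}] [MulAction H {ℓ : L // τ ℓ = ℓ}]
    (hpresH : ∀ (h : H) (x : {x : P // σ x = x}) (ℓ : {ℓ : L // τ ℓ = ℓ}),
        inc (h • x).1 (h • ℓ).1 ↔ inc x.1 ℓ.1)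
    (htransP : MulAction.IsPretransitive H {x : P // σ x = x}) :
    ∃ s' t' : ℕ, 1 ≤ s' ∧ 1 ≤ t' ∧
      IsGenQuadrangle
        (fun (x : {x : P // σ x = x}) (ℓ : {ℓ : L // τ ℓ = ℓ}) => inc x.1 ℓ.1) s' t' :=
  stmt3_general hGQ σ τ hpres hcard h2P H hpresH htransP
end

section
/- Let q = p^f ≥ 4 be a prime power and let X = PSL(2,q). Then any two elements of order 2 in X are conjugate in X, and the number of elements of order 2 in X equals q² − 1 if p = 2, equals q(q+1)/2 if q ≡ 1 (mod 4), and equals q(q−1)/2 if q ≡ 3 (mod 4). -/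
/-!
An element of `PSL(2, F)` has order `2` exactly when it lifts to a non-central `x ∈ SL(2, F)`
of trace `0`: by Cayley–Hamilton `x² = tr(x) x - 1`, so if `tr x ≠ 0` and `x²` is central then
`x` is a polynomial in central elements. Such an `x` satisfies `x² = -1`, so for any vector `v`
that is not an eigenvector, `x` acts on the basis `(v, x v)` as `J = !![0, -1; 1, 0]`. This
conjugates `x` to `J` in `GL(2, F)`; since every element of a finite field is a sum of two
squares `u² + v² = det (u + v J)`, the centralizer of `J` corrects the determinant.

For the count, trace-zero elements `!![a, b; c, -a]` of `SL(2, F)` are the solutions of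
`a² + b c = -1`; for `c ≠ 0` the entry `b` is determined, and for `c = 0` we need `a² = -1`.
This gives `q (q - 1) + q · #{a | a² = -1}` of them, the last factor being `1`, `2` or `0` in the
three cases, and this count is divided by the order of the center.
-/

open Matrix Subgroup Polynomial
open scoped MatrixGroups

theorem FiniteField.exists_sq_add_sq_eq {F : Type*} [Field F] [Finite F] (x : F) :
    ∃ a b : F, a ^ 2 + b ^ 2 = x := by
  have := Fintype.ofFinite F
  by_cases hF : ringChar F = 2
  · obtain ⟨a, ha⟩ := isSquare_of_char_two hF x
    exact ⟨a, 0, by rw [ha]; ring⟩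
  · obtain ⟨a, b, hab⟩ := exists_root_sum_quadratic (degree_X_pow 2)
      (degree_X_pow_sub_C two_pos x) (odd_card_of_char_ne_two hF)
    simp only [eval_pow, eval_X, eval_sub, eval_C] at hab
    exact ⟨a, b, by linear_combination hab⟩

def sqAddMulEquiv {F : Type*} [Field F] [DecidableEq F] (e : F) :
    {v : F × F × F // v.1 ^ 2 + v.2.1 * v.2.2 = e} ≃
      Fˣ × F ⊕ {a : F // a ^ 2 = e} × F where
  toFun v := if h : v.1.2.2 = 0 then .inr (⟨v.1.1, by simpa [h] using v.2⟩, v.1.2.1)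
    else .inl (Units.mk0 _ h, v.1.1)
  invFun := Sum.elim (fun ca ↦ ⟨(ca.2, (e - ca.2 ^ 2) / ca.1, ca.1), by field_simp; ring⟩)
    (fun ab ↦ ⟨(ab.1, ab.2, 0), by simpa using ab.1.2⟩)
  left_inv := by
    rintro ⟨⟨a, b, c⟩, h⟩
    by_cases hc : c = 0
    · subst hc; simp
    · simp only [hc, dite_false, Sum.elim_inl, Units.val_mk0, Subtype.mk.injEq, Prod.mk.injEq,
        true_and, and_true]
      field_simp
      linear_combination -h
  right_inv := by
    rintro (⟨c, a⟩ | ⟨a, b⟩) <;> simp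

namespace Matrix.SpecialLinearGroup

variable {R F : Type*} [CommRing R] [Field F]

lemma coe_sq_fin_two (x : SL(2, R)) :
    ((x ^ 2 : SL(2, R)) : Matrix (Fin 2) (Fin 2) R) =
      trace (x : Matrix (Fin 2) (Fin 2) R) • (x : Matrix (Fin 2) (Fin 2) R) - 1 := by
  nontriviality R
  have := aeval_self_charpoly (x : Matrix (Fin 2) (Fin 2) R)
  simp only [charpoly_fin_two, map_add, map_sub, map_pow, aeval_X, map_mul, aeval_C, x.2, map_one,
    Algebra.algebraMap_eq_smul_one, smul_mul_assoc, one_mul] at this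
  rw [coe_pow, ← sub_eq_zero, ← this]
  abel

lemma sq_eq_neg_one_of_trace_eq_zero {x : SL(2, R)}
    (ht : trace (x : Matrix (Fin 2) (Fin 2) R) = 0) : x ^ 2 = -1 :=
  Subtype.ext (by rw [coe_sq_fin_two, ht, zero_smul, zero_sub]; rfl)

lemma mem_center_fin_two_iff {x : SL(2, F)} : x ∈ center SL(2, F) ↔ x = 1 ∨ x = -1 := by
  rw [mem_center_iff, Fintype.card_fin]
  constructor
  · rintro ⟨r, hr, hx⟩
    rcases sq_eq_one_iff.mp hr with rfl | rfl
    · exact Or.inl (Subtype.ext (by simp [← hx]))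
    · exact Or.inr (Subtype.ext (by rw [← hx, map_neg, map_one]; rfl))
  · rintro (rfl | rfl)
    · exact ⟨1, one_pow 2, by simp⟩
    · exact ⟨-1, by norm_num, by rw [map_neg, map_one]; rfl⟩

lemma trace_eq_zero_of_sq_mem_center {x : SL(2, F)} (hx : x ∉ center SL(2, F))
    (hx2 : x ^ 2 ∈ center SL(2, F)) : trace (x : Matrix (Fin 2) (Fin 2) F) = 0 := by
  by_contra ht
  refine hx (Subgroup.mem_center_iff.mpr fun g ↦ Subtype.ext ?_)
  have hx' : (x : Matrix (Fin 2) (Fin 2) F) =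
      (trace (x : Matrix (Fin 2) (Fin 2) F))⁻¹ • ((x ^ 2 : SL(2, F)) + 1) := by
    rw [coe_sq_fin_two, sub_add_cancel, smul_smul, inv_mul_cancel₀ ht, one_smul]
  have hg : (g : Matrix (Fin 2) (Fin 2) F) * (x ^ 2 : SL(2, F)) = (x ^ 2 : SL(2, F)) * g :=
    congrArg Subtype.val (Subgroup.mem_center_iff.mp hx2 g)
  rw [coe_mul, coe_mul, hx', mul_smul_comm, smul_mul_assoc, mul_add, add_mul, hg, mul_one,
    one_mul]

variable (R) in
def quarterTurn : SL(2, R) :=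
  ⟨!![0, -1; 1, 0], by simp [det_fin_two_of]⟩

lemma exists_det_ne_zero_mul_eq_mul_quarterTurn {x : SL(2, F)}
    (ht : trace (x : Matrix (Fin 2) (Fin 2) F) = 0) (hx : x ∉ center SL(2, F)) :
    ∃ m : Matrix (Fin 2) (Fin 2) F, m.det ≠ 0 ∧ x * m = m * quarterTurn F := by
  obtain ⟨a, b, c, d, hx'⟩ : ∃ a b c d, (x : Matrix (Fin 2) (Fin 2) F) = !![a, b; c, d] :=
    ⟨_, _, _, _, eta_fin_two _⟩
  obtain rfl : d = -a := by
    rw [hx', trace_fin_two_of] at ht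
    linear_combination ht
  have hdet : -a ^ 2 - b * c = 1 := by
    have := x.2
    rw [hx', det_fin_two_of] at this
    linear_combination this
  -- the columns of `m` are `v = (s, t)` and `x v`
  have hconj : ∀ s t : F, (x : Matrix (Fin 2) (Fin 2) F) * !![s, a * s + b * t; t, c * s - a * t]
      = !![s, a * s + b * t; t, c * s - a * t] * quarterTurn F := by
    intro s t
    rw [hx', quarterTurn]
    ext i j
    fin_cases i <;> fin_cases j <;>
      simp only [Fin.zero_eta, Fin.mk_one, Fin.isValue, mul_apply, Fin.sum_univ_two, of_apply,
        cons_val', cons_val_fin_one, cons_val_zero, cons_val_one, mul_zero, mul_one, mul_neg,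
        neg_mul, zero_add, add_zero]
    · linear_combination -s * hdet
    · ring
    · linear_combination -t * hdet
  suffices ∃ s t : F, c * s ^ 2 - 2 * a * s * t - b * t ^ 2 ≠ 0 by
    obtain ⟨s, t, hst⟩ := this
    refine ⟨_, ?_, hconj s t⟩
    rw [det_fin_two_of]
    convert hst using 1
    ring
  by_contra! h
  have hc : c = 0 := by simpa using h 1 0
  have hb : b = 0 := by simpa using h 0 1
  have ha : -a = a := by linear_combination h 1 1 - hc + hb
  subst hb hc
  refine hx (mem_center_iff.mpr ⟨a, ?_, ?_⟩)
  · rw [Fintype.card_fin]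
    linear_combination hdet - a * ha
  · rw [hx', ha]
    ext i j
    fin_cases i <;> fin_cases j <;> simp

lemma isConj_quarterTurn_of_mul_eq [Finite F] {x : SL(2, F)} {m : Matrix (Fin 2) (Fin 2) F}
    (hm : m.det ≠ 0) (h : x * m = m * quarterTurn F) : IsConj (quarterTurn F) x := by
  obtain ⟨u, v, huv⟩ := FiniteField.exists_sq_add_sq_eq m.det⁻¹
  have hcomm : !![u, -v; v, u] * quarterTurn F = quarterTurn F * !![u, -v; v, u] := by
    rw [quarterTurn]
    ext i j
    fin_cases i <;> fin_cases j <;> simp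
  have hdet : (m * !![u, -v; v, u]).det = 1 := by
    rw [det_mul, det_fin_two_of, ← mul_inv_cancel₀ hm]
    linear_combination m.det * huv
  refine isConj_iff.mpr ⟨(⟨_, hdet⟩ : SL(2, F)), mul_inv_eq_of_eq_mul (Subtype.ext ?_)⟩
  change m * !![u, -v; v, u] * quarterTurn F = x * (m * !![u, -v; v, u])
  rw [mul_assoc, hcomm, ← mul_assoc, ← h, mul_assoc]

lemma isConj_quarterTurn [Finite F] {x : SL(2, F)}
    (ht : trace (x : Matrix (Fin 2) (Fin 2) F) = 0) (hx : x ∉ center SL(2, F)) :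
    IsConj (quarterTurn F) x :=
  let ⟨_, hm, hxm⟩ := exists_det_ne_zero_mul_eq_mul_quarterTurn ht hx
  isConj_quarterTurn_of_mul_eq hm hxm

def traceZeroEquiv :
    {x : SL(2, F) // trace (x : Matrix (Fin 2) (Fin 2) F) = 0} ≃
      {v : F × F × F // v.1 ^ 2 + v.2.1 * v.2.2 = -1} where
  toFun x := ⟨(x.1 0 0, x.1 0 1, x.1 1 0), by
    have hdet := x.1.2
    have htr := x.2
    rw [det_fin_two] at hdet
    rw [trace_fin_two] at htr
    linear_combination -hdet + x.1 0 0 * htr⟩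
  invFun v := ⟨⟨!![v.1.1, v.1.2.1; v.1.2.2, -v.1.1], by
    rw [det_fin_two_of]
    linear_combination -v.2⟩, by
    change trace !![v.1.1, v.1.2.1; v.1.2.2, -v.1.1] = 0
    rw [trace_fin_two_of, add_neg_cancel]⟩
  left_inv := by
    rintro ⟨x, htr⟩
    rw [trace_fin_two] at htr
    refine Subtype.ext (ext _ _ fun i j ↦ ?_)
    fin_cases i <;> fin_cases j <;> simp [eq_neg_of_add_eq_zero_right htr]
  right_inv _ := rfl

lemma card_trace_eq_zero [Finite F] :
    Nat.card {x : SL(2, F) // trace (x : Matrix (Fin 2) (Fin 2) F) = 0} =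
      (Nat.card F - 1 + Nat.card {a : F // a ^ 2 = -1}) * Nat.card F := by
  classical
  rw [Nat.card_congr (traceZeroEquiv.trans (sqAddMulEquiv (-1))), Nat.card_sum, Nat.card_prod,
    Nat.card_prod, Nat.card_units, add_mul]

end Matrix.SpecialLinearGroup

namespace Matrix.ProjectiveSpecialLinearGroup

open Matrix.SpecialLinearGroup

variable {F : Type*} [Field F]

lemma orderOf_mk_eq_two_iff (x : SL(2, F)) :
    orderOf (x : PSL(2, F)) = 2 ↔
      trace (x : Matrix (Fin 2) (Fin 2) F) = 0 ∧ x ∉ center SL(2, F) := by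
  rw [orderOf_eq_prime_iff, ← QuotientGroup.mk_pow, Ne, QuotientGroup.eq_one_iff,
    QuotientGroup.eq_one_iff]
  refine ⟨fun ⟨h2, hx⟩ ↦ ⟨trace_eq_zero_of_sq_mem_center hx h2, hx⟩,
    fun ⟨ht, hx⟩ ↦ ⟨?_, hx⟩⟩
  rw [sq_eq_neg_one_of_trace_eq_zero ht]
  exact mem_center_fin_two_iff.mpr (Or.inr rfl)

theorem isConj_of_orderOf_eq_two [Finite F] {g h : PSL(2, F)} (hg : orderOf g = 2)
    (hh : orderOf h = 2) : IsConj g h := by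
  obtain ⟨x, rfl⟩ := QuotientGroup.mk_surjective g
  obtain ⟨y, rfl⟩ := QuotientGroup.mk_surjective h
  obtain ⟨hxt, hxc⟩ := (orderOf_mk_eq_two_iff x).mp hg
  obtain ⟨hyt, hyc⟩ := (orderOf_mk_eq_two_iff y).mp hh
  exact (QuotientGroup.mk' _).map_isConj
    ((isConj_quarterTurn hxt hxc).symm.trans (isConj_quarterTurn hyt hyc))

lemma card_involutions_mul_card_center :
    Nat.card {g : PSL(2, F) // orderOf g = 2} * Nat.card (center SL(2, F)) =
      Nat.card {x : SL(2, F) //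
        trace (x : Matrix (Fin 2) (Fin 2) F) = 0 ∧ x ∉ center SL(2, F)} := by
  rw [mul_comm]
  exact (QuotientGroup.card_preimage_mk _ {g | orderOf g = 2}).symm.trans
    (Nat.card_congr (Equiv.subtypeEquivRight orderOf_mk_eq_two_iff))

theorem card_involutions_of_ringChar_eq_two [Finite F] (hF : ringChar F = 2) :
    Nat.card {g : PSL(2, F) // orderOf g = 2} = Nat.card F ^ 2 - 1 := by
  have : CharP F 2 := ringChar.of_eq hF
  have hcenter : ∀ x : SL(2, F), x ∈ center SL(2, F) ↔ x = 1 := by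
    simp [mem_center_fin_two_iff, show (-1 : SL(2, F)) = 1 from Subtype.ext (CharTwo.neg_eq _)]
  have hsqrt : Nat.card {a : F // a ^ 2 = -1} = 1 := by
    rw [Nat.card_eq_one_iff_exists]
    refine ⟨⟨1, by simp [CharTwo.neg_eq]⟩, fun ⟨a, ha⟩ ↦ Subtype.ext ?_⟩
    simpa [CharTwo.neg_eq] using sq_eq_one_iff.mp (ha.trans (CharTwo.neg_eq 1))
  have htrace_one :
      (1 : SL(2, F)) ∈ {x : SL(2, F) | trace (x : Matrix (Fin 2) (Fin 2) F) = 0} := by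
    simp [CharTwo.two_eq_zero]
  have hinv := card_involutions_mul_card_center (F := F)
  rw [Subgroup.card_eq_one.mpr ((Subgroup.eq_bot_iff_forall _).mpr fun x ↦ (hcenter x).mp),
    mul_one] at hinv
  calc Nat.card {g : PSL(2, F) // orderOf g = 2}
      = Nat.card ↥({x : SL(2, F) | trace (x : Matrix (Fin 2) (Fin 2) F) = 0} \ {1}) :=
        hinv.trans (Nat.card_congr (Equiv.subtypeEquivRight fun x ↦
          and_congr_right' (not_congr (hcenter x))))
    _ = Nat.card {x : SL(2, F) // trace (x : Matrix (Fin 2) (Fin 2) F) = 0} - 1 := by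
        rw [Nat.card_coe_set_eq, Set.ncard_sdiff_singleton_of_mem htrace_one,
          ← Nat.card_coe_set_eq]
        rfl
    _ = Nat.card F ^ 2 - 1 := by
        rw [card_trace_eq_zero, hsqrt, Nat.sub_add_cancel Nat.card_pos, sq]

theorem two_mul_card_involutions_of_ringChar_ne_two [Finite F] (hF : ringChar F ≠ 2) :
    (2 * Nat.card {g : PSL(2, F) // orderOf g = 2} : ℤ) =
      Nat.card F * (Nat.card F + ZMod.χ₄ (Nat.card F)) := by
  classical
  have := Fintype.ofFinite F
  have hsqrt : (Nat.card {a : F // a ^ 2 = -1} : ℤ) = ZMod.χ₄ (Nat.card F) + 1 := by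
    rw [Nat.card_eq_fintype_card, Nat.card_eq_fintype_card, ← quadraticChar_neg_one hF,
      ← quadraticChar_card_sqrts hF, Set.toFinset_card]
    rfl
  have hcenter : Nat.card (center SL(2, F)) = 2 := by
    have hne : (1 : SL(2, F)) ≠ -1 := fun h ↦ Ring.neg_one_ne_one_of_char_ne_two hF
      (by simpa using congrArg (fun x : SL(2, F) ↦ x 0 0) h.symm)
    exact (Nat.card_congr (Equiv.subtypeEquivRight fun x ↦ mem_center_fin_two_iff)).trans
      ((Nat.card_coe_set_eq {1, -1}).trans (Set.ncard_pair hne))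
  have htrace (x : SL(2, F)) :
      trace (x : Matrix (Fin 2) (Fin 2) F) = 0 → x ∉ center SL(2, F) := by
    intro ht hx
    rcases mem_center_fin_two_iff.mp hx with rfl | rfl <;> simp [Ring.two_ne_zero hF] at ht
  have hinv := card_involutions_mul_card_center (F := F)
  rw [hcenter, mul_comm] at hinv
  rw [← Nat.cast_two (R := ℤ), ← Nat.cast_mul, hinv,
    Nat.card_congr (Equiv.subtypeEquivRight fun x ↦ and_iff_left_of_imp (htrace x)),
    card_trace_eq_zero]
  push_cast [Nat.cast_sub Nat.card_pos, hsqrt]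
  ring

end Matrix.ProjectiveSpecialLinearGroup

open Matrix.ProjectiveSpecialLinearGroup in
/-- In `X = PSL(2, q)` with `q = p ^ f ≥ 4`, all involutions are conjugate, and their
number is `q² - 1` if `p = 2`, `q(q+1)/2` if `q ≡ 1 (mod 4)`, and `q(q-1)/2` if
`q ≡ 3 (mod 4)`. -/
theorem stmt6 (p f q : ℕ) [Fact p.Prime] (hq : q = p ^ f) (hq4 : 4 ≤ q) :
    (∀ g h : PSL(2, GaloisField p f), orderOf g = 2 → orderOf h = 2 → IsConj g h) ∧
    (p = 2 →
      Nat.card {g : PSL(2, GaloisField p f) // orderOf g = 2} = q ^ 2 - 1) ∧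
    (q % 4 = 1 →
      2 * Nat.card {g : PSL(2, GaloisField p f) // orderOf g = 2} = q * (q + 1)) ∧
    (q % 4 = 3 →
      2 * Nat.card {g : PSL(2, GaloisField p f) // orderOf g = 2} = q * (q - 1)) := by
  have hf : f ≠ 0 := by
    rintro rfl
    rw [pow_zero] at hq
    omega
  have hcard : Nat.card (GaloisField p f) = q := by rw [GaloisField.card p f hf, hq]
  have hodd (h : q % 2 = 1) : ringChar (GaloisField p f) ≠ 2 := by
    rw [ringChar.eq (GaloisField p f) p]
    rintro rfl
    have : 2 ∣ q := hq ▸ dvd_pow_self 2 hf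
    omega
  refine ⟨fun g h ↦ isConj_of_orderOf_eq_two, fun hp ↦ ?_, fun h1 ↦ ?_, fun h3 ↦ ?_⟩
  · subst hp
    rw [card_involutions_of_ringChar_eq_two (ringChar.eq _ 2), hcard]
  · have := two_mul_card_involutions_of_ringChar_ne_two (hodd (by omega))
    rw [hcard, ZMod.χ₄_nat_one_mod_four h1] at this
    exact_mod_cast this
  · have := two_mul_card_involutions_of_ringChar_ne_two (hodd (by omega))
    rw [hcard, ZMod.χ₄_nat_three_mod_four h3] at this
    rw [← Nat.cast_inj (R := ℤ)]
    push_cast [Nat.cast_sub (by omega : 1 ≤ q)]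
    linear_combination this
end

section
/- Let q = 2^f with f ≥ 2, let X = PSL(2,q) (= SL(2,q) since the center is trivial), and let g ∈ X be an element of order 2. Then the centralizer C_X(g) is an elementary abelian 2-group of order q, i.e., |C_X(g)| = q and every element x of C_X(g) satisfies x² = 1. -/
/-!
In characteristic `2` an involution `A` of `SL(2, K)` is `1 + N` with `N = A - 1` nonzero and
square-zero. A `2 × 2` matrix commuting with such an `N` has the form `a + t N`, whose determinant
is `a ^ 2`; in `SL(2, K)` this forces `a = 1`. So the centralizer of `A` is the image of the
injective homomorphism `t ↦ 1 + t N` from `(K, +)`, an elementary abelian `2`-group of order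
`|K|`. As `1` is the only square root of `1` in `K`, the center of `SL(2, K)` is trivial and
`PSL(2, K) = SL(2, K)`.
-/

open scoped MatrixGroups

namespace Matrix

variable {K : Type*} [Field K]

theorem eq_smul_one_add_smul_iff_fin_two {M N : Matrix (Fin 2) (Fin 2) K} {a t : K} :
    M = a • 1 + t • N ↔ M 0 0 = a + t * N 0 0 ∧ M 0 1 = t * N 0 1 ∧ M 1 0 = t * N 1 0 ∧
      M 1 1 = a + t * N 1 1 := by
  simp [← Matrix.ext_iff, Fin.forall_fin_two, and_assoc]

theorem trace_eq_zero_of_mul_self_eq_zero {n : Type*} [Fintype n] [DecidableEq n]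
    {N : Matrix n n K} (hN : N * N = 0) : N.trace = 0 :=
  (isNilpotent_trace_of_isNilpotent ⟨2, by rw [sq, hN]⟩).eq_zero

theorem det_eq_zero_of_mul_self_eq_zero {n : Type*} [Fintype n] [DecidableEq n] [Nonempty n]
    {N : Matrix n n K} (hN : N * N = 0) : N.det = 0 :=
  pow_eq_zero_iff two_ne_zero |>.mp <| by rw [sq, ← det_mul, hN, det_zero]

theorem det_smul_one_add_smul_of_mul_self_eq_zero {N : Matrix (Fin 2) (Fin 2) K}
    (hN : N * N = 0) (a t : K) : (a • 1 + t • N).det = a ^ 2 := by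
  have htr := trace_eq_zero_of_mul_self_eq_zero hN
  have hdet := det_eq_zero_of_mul_self_eq_zero hN
  rw [trace_fin_two] at htr
  rw [det_fin_two] at hdet
  obtain ⟨h00, h01, h10, h11⟩ :=
    eq_smul_one_add_smul_iff_fin_two.mp (rfl : a • 1 + t • N = _)
  rw [det_fin_two, h00, h01, h10, h11]
  linear_combination (a * t) * htr + t ^ 2 * hdet

theorem one_add_smul_mul_one_add_smul {n : Type*} [Fintype n] [DecidableEq n] {N : Matrix n n K}
    (hN : N * N = 0) (s t : K) : (1 + s • N) * (1 + t • N) = 1 + (s + t) • N := by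
  simp only [add_mul, mul_add, one_mul, mul_one, smul_mul_assoc, mul_smul_comm, hN, smul_zero,
    add_zero, add_smul]
  abel

theorem exists_eq_smul_one_add_smul_of_commute {M N : Matrix (Fin 2) (Fin 2) K}
    (hN0 : N ≠ 0) (hN : N * N = 0) (hMN : Commute M N) : ∃ a t : K, M = a • 1 + t • N := by
  have htr := trace_eq_zero_of_mul_self_eq_zero hN
  have hdet := det_eq_zero_of_mul_self_eq_zero hN
  rw [trace_fin_two] at htr
  rw [det_fin_two] at hdet
  have hc : ∀ i j, (M * N) i j = (N * M) i j := fun i j => by rw [hMN.eq]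
  have h00 := hc 0 0
  have h01 := hc 0 1
  have h10 := hc 1 0
  simp only [mul_apply, Fin.sum_univ_two] at h00 h01 h10
  -- `t` is read off a nonzero off-diagonal entry of `N`.
  by_cases hq : N 0 1 = 0
  · have hp : N 0 0 = 0 := pow_eq_zero_iff two_ne_zero |>.mp <| by
      linear_combination N 0 0 * htr - hdet - N 1 0 * hq
    have hs : N 1 1 = 0 := by linear_combination htr - hp
    have hr : N 1 0 ≠ 0 := by
      refine fun hr => hN0 (Matrix.ext fun i j => ?_)
      fin_cases i <;> fin_cases j <;> assumption
    refine ⟨M 0 0, M 1 0 / N 1 0, eq_smul_one_add_smul_iff_fin_two.mpr ⟨?_, ?_, ?_, ?_⟩⟩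
    · rw [hp, mul_zero, add_zero]
    · rw [hq, mul_zero]
      exact (mul_eq_zero.mp (by linear_combination h00 + M 1 0 * hq)).resolve_right hr
    · rw [div_mul_cancel₀ _ hr]
    · rw [hs, mul_zero, add_zero]
      exact mul_left_cancel₀ hr (by linear_combination h10 - M 1 0 * hp + M 1 0 * hs)
  · refine ⟨M 0 0 - M 0 1 / N 0 1 * N 0 0, M 0 1 / N 0 1,
      eq_smul_one_add_smul_iff_fin_two.mpr ⟨by ring, (div_mul_cancel₀ _ hq).symm, ?_, ?_⟩⟩
    · field_simp
      linear_combination -h00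
    · field_simp
      linear_combination -h01

namespace SpecialLinearGroup

def oneAddSMulHom (N : Matrix (Fin 2) (Fin 2) K) (hN : N * N = 0) :
    Multiplicative K →* SL(2, K) where
  toFun t := ⟨1 + t.toAdd • N, by
    simpa using det_smul_one_add_smul_of_mul_self_eq_zero hN 1 t.toAdd⟩
  map_one' := Subtype.ext <| by simp
  map_mul' s t := Subtype.ext (one_add_smul_mul_one_add_smul hN s.toAdd t.toAdd).symm

@[simp]
theorem coe_oneAddSMulHom {N : Matrix (Fin 2) (Fin 2) K} (hN : N * N = 0) (t : Multiplicative K) :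
    (oneAddSMulHom N hN t : Matrix (Fin 2) (Fin 2) K) = 1 + t.toAdd • N :=
  rfl

theorem oneAddSMulHom_injective {N : Matrix (Fin 2) (Fin 2) K} (hN0 : N ≠ 0) (hN : N * N = 0) :
    Function.Injective (oneAddSMulHom N hN) := fun _ _ hst =>
  smul_left_injective K hN0 <| add_left_cancel (congrArg Subtype.val hst)

variable [CharP K 2]

theorem exists_oneAddSMulHom_eq_of_sq_eq_one {A : SL(2, K)} (hA2 : A ^ 2 = 1) (hA1 : A ≠ 1) :
    ∃ (N : Matrix (Fin 2) (Fin 2) K) (_ : N ≠ 0) (hN : N * N = 0),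
      oneAddSMulHom N hN (.ofAdd 1) = A := by
  have hAA : (A : Matrix (Fin 2) (Fin 2) K) * A = 1 := by
    simpa [sq] using congrArg Subtype.val hA2
  have h2 : (2 : Matrix (Fin 2) (Fin 2) K) = 0 := CharTwo.two_eq_zero
  have hN : ((A : Matrix (Fin 2) (Fin 2) K) - 1) * (A - 1) = 0 :=
    calc ((A : Matrix (Fin 2) (Fin 2) K) - 1) * (A - 1) = A * A - 1 - 2 * (A - 1) := by
          noncomm_ring
      _ = 0 := by rw [hAA, h2, zero_mul, sub_self, sub_zero]
  refine ⟨A - 1, sub_ne_zero.mpr fun h => hA1 (Subtype.ext h), hN,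
    Subtype.ext (by simp only [coe_oneAddSMulHom, toAdd_ofAdd, one_smul, add_sub_cancel])⟩

theorem centralizer_oneAddSMulHom {N : Matrix (Fin 2) (Fin 2) K} (hN0 : N ≠ 0) (hN : N * N = 0)
    {c : K} (hc : c ≠ 0) :
    Subgroup.centralizer {oneAddSMulHom N hN (.ofAdd c)} = (oneAddSMulHom N hN).range := by
  ext B
  rw [Subgroup.mem_centralizer_singleton_iff, MonoidHom.mem_range]
  constructor
  · intro hB
    have hcomm : Commute (B : Matrix (Fin 2) (Fin 2) K) (1 + c • N) :=
      congrArg Subtype.val hB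
    replace hcomm : Commute (B : Matrix (Fin 2) (Fin 2) K) N := by
      simpa [hc] using hcomm.sub_right (Commute.one_right _)
    obtain ⟨a, t, hB⟩ := exists_eq_smul_one_add_smul_of_commute hN0 hN hcomm
    have ha : a = 1 := CharTwo.sq_injective <| show a ^ 2 = 1 ^ 2 by
      rw [← det_smul_one_add_smul_of_mul_self_eq_zero hN a t, ← hB, B.2, one_pow]
    exact ⟨.ofAdd t, Subtype.ext (by simp [hB, ha])⟩
  · rintro ⟨t, rfl⟩
    rw [← map_mul, ← map_mul, mul_comm]

theorem card_centralizer_of_sq_eq_one {A : SL(2, K)} (hA2 : A ^ 2 = 1) (hA1 : A ≠ 1) :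
    Nat.card (Subgroup.centralizer {A}) = Nat.card K := by
  obtain ⟨N, hN0, hN, rfl⟩ := exists_oneAddSMulHom_eq_of_sq_eq_one hA2 hA1
  rw [centralizer_oneAddSMulHom hN0 hN one_ne_zero,
    ← Nat.card_congr (MonoidHom.ofInjective (oneAddSMulHom_injective hN0 hN)).toEquiv]
  rfl

theorem sq_eq_one_of_mem_centralizer {A B : SL(2, K)} (hA2 : A ^ 2 = 1) (hA1 : A ≠ 1)
    (hB : B ∈ Subgroup.centralizer {A}) : B ^ 2 = 1 := by
  obtain ⟨N, hN0, hN, rfl⟩ := exists_oneAddSMulHom_eq_of_sq_eq_one hA2 hA1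
  rw [centralizer_oneAddSMulHom hN0 hN one_ne_zero] at hB
  obtain ⟨t, rfl⟩ := hB
  rw [← map_pow, ← ofAdd_toAdd t, ← ofAdd_nsmul, two_nsmul, CharTwo.add_self_eq_zero,
    ofAdd_zero, map_one]

theorem center_eq_bot : Subgroup.center SL(2, K) = ⊥ := by
  refine (Subgroup.eq_bot_iff_forall _).mpr fun A hA => ?_
  obtain ⟨r, hr, hrA⟩ := mem_center_iff.mp hA
  rw [Fintype.card_fin, ← one_pow 2] at hr
  exact Subtype.ext (by rw [← hrA, CharTwo.sq_injective hr, map_one]; rfl)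

end SpecialLinearGroup

end Matrix

theorem MulEquiv.apply_mem_centralizer_singleton_iff {G H : Type*} [Group G] [Group H]
    (e : G ≃* H) {g x : G} :
    e x ∈ Subgroup.centralizer {e g} ↔ x ∈ Subgroup.centralizer {g} := by
  simp only [Subgroup.mem_centralizer_singleton_iff, ← map_mul, e.injective.eq_iff]

theorem MulEquiv.card_centralizer_singleton {G H : Type*} [Group G] [Group H] (e : G ≃* H)
    (g : G) :
    Nat.card (Subgroup.centralizer {e g}) = Nat.card (Subgroup.centralizer {g}) :=
  Nat.card_congr (e.toEquiv.subtypeEquiv fun _ => e.apply_mem_centralizer_singleton_iff.symm).symm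

/-- In `X = PSL(2, q)` with `q = 2 ^ f`, `f ≥ 2`, the centralizer of an involution is an
elementary abelian `2`-group of order `q`: it has cardinality `q` and every element
squares to the identity. -/
theorem stmt8 (f : ℕ) (hf : 2 ≤ f)
    (g : PSL(2, GaloisField 2 f)) (hg : orderOf g = 2) :
    Nat.card (Subgroup.centralizer {g}) = 2 ^ f ∧
    ∀ x ∈ Subgroup.centralizer {g}, x ^ 2 = 1 := by
  let e : PSL(2, GaloisField 2 f) ≃* SL(2, GaloisField 2 f) :=
    (QuotientGroup.quotientMulEquivOfEq Matrix.SpecialLinearGroup.center_eq_bot).trans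
      QuotientGroup.quotientBot
  obtain ⟨hg2, hg1⟩ := orderOf_eq_prime_iff.mp ((e.orderOf_eq g).trans hg)
  refine ⟨?_, fun x hx => e.injective ?_⟩
  · rw [← e.card_centralizer_singleton,
      Matrix.SpecialLinearGroup.card_centralizer_of_sq_eq_one hg2 hg1,
      GaloisField.card 2 f (by omega)]
  · rw [map_pow, map_one]
    exact Matrix.SpecialLinearGroup.sq_eq_one_of_mem_centralizer hg2 hg1
      (e.apply_mem_centralizer_singleton_iff.mpr hx)
end

section
/- Let S be a finite thick generalized quadrangle of order (s,t) with s,t ≥ 2, and let G be a finite group acting on S by automorphisms, transitively on the points and transitively on the lines. Fix a point α and a line ℓ of S, with stabilizers G_α and G_ℓ. Then |G_α|⁴ < |G_ℓ|³ · |G| and |G_ℓ|⁴ < |G_α|³ · |G|. -/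
/-!
By orbit–stabilizer, `|G| = |P| |G_α| = |L| |G_ℓ|`, so the two inequalities amount to
`|L|³ < |P|⁴` and `|P|³ < |L|⁴`, where `|P| = (s + 1)(st + 1)` and `|L| = (t + 1)(st + 1)`.
These follow from Higman's inequality `t ≤ s²` and its dual `s ≤ t²`. Higman's inequality is
Cauchy–Schwarz for the numbers of neighbours in `{x, y}ᗮ` of the points collinear with neither
of two noncollinear points `x, y`: the sum and the sum of squares of these numbers are
determined by `s` and `t`, and the variance comes out as a positive multiple of `s² - t`.
-/

open Finset

theorem Finset.sum_sq_card_bipartiteAbove {α β : Type*} (s : Finset α) (t : Finset β)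
    (r : α → β → Prop) [∀ a b, Decidable (r a b)] [DecidableEq α] :
    ∑ a ∈ s, #(t.bipartiteAbove r a) ^ 2 =
      ∑ b ∈ t, ∑ b' ∈ t, #(s.bipartiteBelow r b ∩ s.bipartiteBelow r b') := by
  simp_rw [sq, bipartiteAbove, bipartiteBelow, ← filter_and, card_filter,
    sum_mul_sum, ite_zero_mul_ite_zero, mul_one]
  rw [sum_comm]
  exact sum_congr rfl fun _ _ => sum_comm

theorem MulAction.natCard_mul_natCard_stabilizer {G X : Type*} [Group G] [MulAction G X]
    [MulAction.IsPretransitive G X] (x : X) :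
    Nat.card X * Nat.card (MulAction.stabilizer G x) = Nat.card G := by
  rw [← MulAction.index_stabilizer_of_transitive G x]
  exact Subgroup.index_mul_card _

theorem Nat.pow_four_lt_pow_three_mul_of_mul_eq {p l a b n : ℕ} (hp : p * a = n)
    (hl : l * b = n) (hlp : l ^ 3 < p ^ 4) (ha : 0 < a) : a ^ 4 < b ^ 3 * n :=
  Nat.lt_of_mul_lt_mul_left (a := l ^ 3) <| calc
    l ^ 3 * a ^ 4 < p ^ 4 * a ^ 4 := by gcongr
    _ = l ^ 3 * (b ^ 3 * n) := by rw [← mul_pow, hp, ← hl]; ring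

theorem Nat.pow_three_lt_pow_four_of_le_sq {s t : ℕ} (hs : 0 < s) (hts : t ≤ s ^ 2) :
    ((t + 1) * (t * s + 1)) ^ 3 < ((s + 1) * (s * t + 1)) ^ 4 := by
  have ht : (t + 1) ^ 3 < (s + 1) ^ 4 * (s * t + 1) := calc
    (t + 1) ^ 3 = (t + 1) ^ 2 * (t + 1) := by ring
    _ ≤ (s ^ 2 + 1) ^ 2 * (s * t + 1) := by gcongr; nlinarith
    _ < (s + 1) ^ 4 * (s * t + 1) := by gcongr; nlinarith
  calc ((t + 1) * (t * s + 1)) ^ 3 = (t + 1) ^ 3 * (s * t + 1) ^ 3 := by ring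
    _ < (s + 1) ^ 4 * (s * t + 1) * (s * t + 1) ^ 3 := by gcongr
    _ = ((s + 1) * (s * t + 1)) ^ 4 := by ring

namespace IsGenQuadrangle

variable {P L : Type*} {inc : P → L → Prop} {s t : ℕ}

theorem dual (hGQ : IsGenQuadrangle inc s t) :
    IsGenQuadrangle (fun (m : L) (x : P) => inc x m) t s where
  pts_per_line := hGQ.lines_per_pt
  lines_per_pt := hGQ.pts_per_line
  unique_line _ _ hmn _ _ hxm hxn hym hyn :=
    by_contra fun hxy => hmn (hGQ.unique_line hxy hxm hym hxn hyn)
  proj m x hxm := by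
    obtain ⟨⟨y, n⟩, ⟨hxn, hyn, hym⟩, hunique⟩ := hGQ.proj hxm
    refine ⟨(n, y), ⟨hym, hyn, hxn⟩, fun q hq => ?_⟩
    exact congrArg Prod.swap (hunique q.swap ⟨hq.2.2, hq.2.1, hq.1⟩)

def Collinear (inc : P → L → Prop) (x y : P) : Prop := ∃ m, inc x m ∧ inc y m

theorem Collinear.symm {x y : P} (h : Collinear inc x y) : Collinear inc y x :=
  let ⟨m, hx, hy⟩ := h; ⟨m, hy, hx⟩

theorem exists_inc (hGQ : IsGenQuadrangle inc s t) (x : P) : ∃ m, inc x m := by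
  obtain ⟨⟨m, hm⟩⟩ := (Nat.card_pos_iff.1 (by rw [hGQ.lines_per_pt x]; omega)).1
  exact ⟨m, hm⟩

theorem collinear_refl (hGQ : IsGenQuadrangle inc s t) (x : P) : Collinear inc x x :=
  let ⟨m, hm⟩ := hGQ.exists_inc x; ⟨m, hm, hm⟩

theorem existsUnique_collinear_of_not_inc (hGQ : IsGenQuadrangle inc s t) {x : P} {m : L}
    (hxm : ¬ inc x m) : ∃! u : P, inc u m ∧ Collinear inc u x := by
  obtain ⟨⟨y, n⟩, ⟨hxn, hyn, hym⟩, hunique⟩ := hGQ.proj hxm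
  refine ⟨y, ⟨hym, n, hyn, hxn⟩, ?_⟩
  rintro u ⟨hum, n', hun', hxn'⟩
  exact congrArg Prod.fst (hunique (u, n') ⟨hxn', hun', hum⟩)

theorem eq_of_inc_of_collinear (hGQ : IsGenQuadrangle inc s t) {x u v : P} {m : L}
    (hxm : ¬ inc x m) (hum : inc u m) (hvm : inc v m) (hux : Collinear inc u x)
    (hvx : Collinear inc v x) : u = v :=
  (hGQ.existsUnique_collinear_of_not_inc hxm).unique ⟨hum, hux⟩ ⟨hvm, hvx⟩

theorem not_collinear_of_inc_of_ne (hGQ : IsGenQuadrangle inc s t) {x u z : P} {m n : L}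
    (hux : u ≠ x) (hum : inc u m) (hxm : inc x m) (hun : inc u n) (hnm : n ≠ m)
    (hzn : inc z n) (hzu : z ≠ u) : ¬ Collinear inc z x := fun hzx =>
  have hxn : ¬ inc x n := fun hxn => hnm (hGQ.unique_line hux hun hxn hum hxm)
  hzu (hGQ.eq_of_inc_of_collinear hxn hzn hun hzx ⟨m, hum, hxm⟩)

/-- Otherwise `u`, `v` and one of `a`, `b` would form a triangle. -/
theorem not_collinear_of_collinear_of_collinear (hGQ : IsGenQuadrangle inc s t) {a b u v : P}
    (hab : ¬ Collinear inc a b) (hua : Collinear inc u a) (hub : Collinear inc u b)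
    (hva : Collinear inc v a) (hvb : Collinear inc v b) (huv : u ≠ v) :
    ¬ Collinear inc u v := by
  rintro ⟨n, hun, hvn⟩
  by_cases han : inc a n
  · exact huv (hGQ.eq_of_inc_of_collinear (fun hbn => hab ⟨n, han, hbn⟩) hun hvn hub hvb)
  · exact huv (hGQ.eq_of_inc_of_collinear han hun hvn hua hva)

section Counting

open scoped Classical

noncomputable def pointsOn [Fintype P] (inc : P → L → Prop) (m : L) : Finset P := {x | inc x m}

noncomputable def linesThrough [Fintype L] (inc : P → L → Prop) (x : P) : Finset L :=
  {m | inc x m}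

/-- The set `xᗮ` of points collinear with `x`, including `x` itself. -/
noncomputable def perp [Fintype P] (inc : P → L → Prop) (x : P) : Finset P :=
  {z | Collinear inc z x}

@[simp] theorem mem_pointsOn [Fintype P] {x : P} {m : L} : x ∈ pointsOn inc m ↔ inc x m := by
  simp [pointsOn]

@[simp] theorem mem_linesThrough [Fintype L] {x : P} {m : L} :
    m ∈ linesThrough inc x ↔ inc x m := by
  simp [linesThrough]

@[simp] theorem mem_perp [Fintype P] {x z : P} : z ∈ perp inc x ↔ Collinear inc z x := by
  simp [perp]

theorem card_pointsOn [Fintype P] (hGQ : IsGenQuadrangle inc s t) (m : L) :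
    #(pointsOn inc m) = s + 1 := by
  simpa [pointsOn, Nat.card_eq_fintype_card, Fintype.card_subtype] using hGQ.pts_per_line m

theorem card_linesThrough [Fintype L] (hGQ : IsGenQuadrangle inc s t) (x : P) :
    #(linesThrough inc x) = t + 1 := by
  simpa [linesThrough, Nat.card_eq_fintype_card, Fintype.card_subtype] using
    hGQ.lines_per_pt x

theorem card_biUnion_pointsOn_erase [Fintype P] (hGQ : IsGenQuadrangle inc s t) {y : P}
    {K : Finset L} (hK : ∀ m ∈ K, inc y m) :
    #(K.biUnion fun m => (pointsOn inc m).erase y) = #K * s := by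
  rw [card_biUnion, sum_const_nat]
  · intro m hm
    rw [card_erase_of_mem (mem_pointsOn.2 (hK m hm)), card_pointsOn hGQ, Nat.add_sub_cancel]
  · intro m hm n hn hmn
    simp only [Function.onFun, disjoint_left, mem_erase, mem_pointsOn]
    exact fun z hzm hzn => hmn (hGQ.unique_line hzm.1 hzm.2 (hK m hm) hzn.2 (hK n hn))

theorem bipartiteBelow_collinear [Fintype P] (T : Finset P) (u : P) :
    T.bipartiteBelow (Collinear inc) u = T ∩ perp inc u := by
  ext z; simp

section

variable [Fintype P] [Fintype L]

theorem perp_eq_insert_biUnion (hGQ : IsGenQuadrangle inc s t) (x : P) :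
    perp inc x = insert x ((linesThrough inc x).biUnion fun m => (pointsOn inc m).erase x) := by
  ext z
  simp only [mem_perp, mem_insert, mem_biUnion, mem_erase, mem_pointsOn, mem_linesThrough]
  constructor
  · rintro ⟨m, hzm, hxm⟩
    exact or_iff_not_imp_left.2 fun hzx => ⟨m, hxm, hzx, hzm⟩
  · rintro (rfl | ⟨m, hxm, -, hzm⟩)
    exacts [hGQ.collinear_refl z, ⟨m, hzm, hxm⟩]

theorem card_perp (hGQ : IsGenQuadrangle inc s t) (x : P) :
    #(perp inc x) = (t + 1) * s + 1 := by
  rw [hGQ.perp_eq_insert_biUnion, card_insert_of_notMem (by simp),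
    card_biUnion_pointsOn_erase hGQ (fun m hm => mem_linesThrough.1 hm), card_linesThrough hGQ]

/-- Each line through `a` contains exactly one point of `{a, b}ᗮ`. -/
theorem card_perp_inter_perp (hGQ : IsGenQuadrangle inc s t) {a b : P}
    (hab : ¬ Collinear inc a b) : #(perp inc a ∩ perp inc b) = t + 1 := by
  set F := perp inc a ∩ perp inc b
  have hF : F = (linesThrough inc a).biUnion fun m => F.filter (inc · m) := by
    ext u
    simp only [F, mem_biUnion, mem_filter, mem_inter, mem_perp, mem_linesThrough]
    constructor
    · rintro hu
      obtain ⟨m, hum, ham⟩ := hu.1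
      exact ⟨m, ham, hu, hum⟩
    · rintro ⟨m, -, hu, -⟩
      exact hu
  have hsingle : ∀ m ∈ linesThrough inc a, #(F.filter (inc · m)) = 1 := by
    intro m ham
    rw [mem_linesThrough] at ham
    obtain ⟨w, ⟨hwm, hwb⟩, hw⟩ := hGQ.existsUnique_collinear_of_not_inc (m := m)
      fun hbm => hab ⟨m, ham, hbm⟩
    refine card_eq_one.2 ⟨w, ext fun u => ?_⟩
    simp only [F, mem_filter, mem_inter, mem_perp, mem_singleton]
    refine ⟨fun hu => hw u ⟨hu.2, hu.1.2⟩, ?_⟩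
    rintro rfl
    exact ⟨⟨⟨m, hwm, ham⟩, hwb⟩, hwm⟩
  rw [hF, card_biUnion, sum_congr rfl hsingle, sum_const_nat (fun _ _ => rfl),
    card_linesThrough hGQ, mul_one]
  intro m hm n hn hmn
  simp only [Function.onFun, disjoint_left, mem_filter]
  intro u hum hun
  have hua : u ≠ a := by
    rintro rfl
    exact hab (mem_perp.1 (mem_inter.1 hum.1).2)
  exact hmn (hGQ.unique_line hua hum.2 (mem_linesThrough.1 hm) hun.2 (mem_linesThrough.1 hn))

theorem card_filter_not_inc_collinear (hGQ : IsGenQuadrangle inc s t) {y : P} {m : L}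
    (hym : inc y m) : #{z | ¬ inc z m ∧ Collinear inc z y} = t * s := by
  have hfibre : ({z | ¬ inc z m ∧ Collinear inc z y} : Finset P) =
      ((linesThrough inc y).erase m).biUnion fun n => (pointsOn inc n).erase y := by
    ext z
    simp only [mem_filter, mem_univ, true_and, mem_biUnion, mem_erase, mem_linesThrough,
      mem_pointsOn]
    constructor
    · rintro ⟨hzm, n, hzn, hyn⟩
      exact ⟨n, ⟨fun hnm => hzm (hnm ▸ hzn), hyn⟩, fun hzy => hzm (hzy ▸ hym), hzn⟩
    · rintro ⟨n, ⟨hnm, hyn⟩, hzy, hzn⟩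
      exact ⟨fun hzm => hnm (hGQ.unique_line hzy hzn hyn hzm hym), n, hzn, hyn⟩
  rw [hfibre, card_biUnion_pointsOn_erase hGQ fun n hn => mem_linesThrough.1 (mem_of_mem_erase hn),
    card_erase_of_mem (mem_linesThrough.2 hym), card_linesThrough hGQ, Nat.add_sub_cancel]

/-- The points off a line `m` are partitioned by their projections onto `m`. -/
theorem card_filter_not_inc (hGQ : IsGenQuadrangle inc s t) (m : L) :
    #{z | ¬ inc z m} = (s + 1) * (t * s) := by
  have hpartition : ({z | ¬ inc z m} : Finset P) =
      (pointsOn inc m).biUnion fun y => {z | ¬ inc z m ∧ Collinear inc z y} := by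
    ext z
    simp only [mem_filter, mem_univ, true_and, mem_biUnion, mem_pointsOn]
    refine ⟨fun hzm => ?_, fun ⟨_, _, hzm, _⟩ => hzm⟩
    obtain ⟨y, ⟨hym, hyz⟩, -⟩ := hGQ.existsUnique_collinear_of_not_inc hzm
    exact ⟨y, hym, hzm, hyz.symm⟩
  rw [hpartition, card_biUnion, sum_congr rfl fun y hy =>
    card_filter_not_inc_collinear hGQ (mem_pointsOn.1 hy), sum_const_nat (fun _ _ => rfl),
    card_pointsOn hGQ]
  intro y hy y' hy' hyy'
  simp only [Function.onFun, disjoint_left, mem_filter, mem_univ, true_and]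
  exact fun z ⟨hzm, hzy⟩ ⟨_, hzy'⟩ => hyy' (hGQ.eq_of_inc_of_collinear hzm
    (mem_pointsOn.1 hy) (mem_pointsOn.1 hy') hzy.symm hzy'.symm)

theorem card_points (hGQ : IsGenQuadrangle inc s t) (m : L) :
    Fintype.card P = (s + 1) * (s * t + 1) := by
  have hon : #{z | inc z m} = s + 1 := hGQ.card_pointsOn m
  rw [← card_univ, ← card_filter_add_card_filter_not (inc · m), hon, hGQ.card_filter_not_inc m]
  ring

theorem card_compl_perp_union_perp (hGQ : IsGenQuadrangle inc s t) {x y : P}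
    (hxy : ¬ Collinear inc x y) :
    #(perp inc x ∪ perp inc y)ᶜ + 2 * ((t + 1) * s + 1) = (s + 1) * (s * t + 1) + (t + 1) := by
  obtain ⟨m, -⟩ := hGQ.exists_inc x
  have hunion := card_union_add_card_inter (perp inc x) (perp inc y)
  rw [card_perp hGQ, card_perp hGQ, card_perp_inter_perp hGQ hxy] at hunion
  have hcompl := card_add_card_compl (perp inc x ∪ perp inc y)
  rw [hGQ.card_points m] at hcompl
  omega

theorem card_compl_perp_union_perp_inter_perp (hGQ : IsGenQuadrangle inc s t) {x y u : P}
    (hxy : ¬ Collinear inc x y) (hu : u ∈ perp inc x ∩ perp inc y) :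
    #((perp inc x ∪ perp inc y)ᶜ ∩ perp inc u) = (t - 1) * s := by
  simp only [mem_inter, mem_perp] at hu
  obtain ⟨⟨mx, humx, hxmx⟩, ⟨my, humy, hymy⟩⟩ := hu
  have hux : u ≠ x := by rintro rfl; exact hxy ⟨my, humy, hymy⟩
  have huy : u ≠ y := by rintro rfl; exact hxy ⟨mx, hxmx, humx⟩
  have hmxy : mx ≠ my := by rintro rfl; exact hxy ⟨mx, hxmx, hymy⟩
  have hlines : #(((linesThrough inc u).erase mx).erase my) = t - 1 := by
    rw [card_erase_of_mem (mem_erase.2 ⟨hmxy.symm, mem_linesThrough.2 humy⟩),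
      card_erase_of_mem (mem_linesThrough.2 humx), card_linesThrough hGQ]
    omega
  have hset : (perp inc x ∪ perp inc y)ᶜ ∩ perp inc u =
      (((linesThrough inc u).erase mx).erase my).biUnion fun n => (pointsOn inc n).erase u := by
    ext z
    simp only [mem_inter, mem_compl, mem_union, mem_perp, not_or, mem_biUnion, mem_erase,
      mem_linesThrough, mem_pointsOn]
    constructor
    · rintro ⟨⟨hzx, hzy⟩, n, hzn, hun⟩
      refine ⟨n, ⟨?_, ?_, hun⟩, ?_, hzn⟩
      · rintro rfl; exact hzy ⟨n, hzn, hymy⟩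
      · rintro rfl; exact hzx ⟨n, hzn, hxmx⟩
      · rintro rfl; exact hzx ⟨mx, humx, hxmx⟩
    · rintro ⟨n, ⟨hnmy, hnmx, hun⟩, hzu, hzn⟩
      exact ⟨⟨hGQ.not_collinear_of_inc_of_ne hux humx hxmx hun hnmx hzn hzu,
        hGQ.not_collinear_of_inc_of_ne huy humy hymy hun hnmy hzn hzu⟩, n, hzn, hun⟩
  rw [hset, card_biUnion_pointsOn_erase hGQ fun n hn =>
    mem_linesThrough.1 (mem_of_mem_erase (mem_of_mem_erase hn)), hlines]

theorem card_compl_perp_union_perp_inter_perp_inter_perp (hGQ : IsGenQuadrangle inc s t)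
    {x y u v : P} (hxy : ¬ Collinear inc x y) (hu : u ∈ perp inc x ∩ perp inc y)
    (hv : v ∈ perp inc x ∩ perp inc y) (huv : u ≠ v) :
    #((perp inc x ∪ perp inc y)ᶜ ∩ (perp inc u ∩ perp inc v)) = t - 1 := by
  simp only [mem_inter, mem_perp] at hu hv
  have hnuv := hGQ.not_collinear_of_collinear_of_collinear hxy hu.1 hu.2 hv.1 hv.2 huv
  have hx : x ∈ perp inc u ∩ perp inc v := by simpa using ⟨hu.1.symm, hv.1.symm⟩
  have hy : y ∈ perp inc u ∩ perp inc v := by simpa using ⟨hu.2.symm, hv.2.symm⟩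
  have hxy' : x ≠ y := by rintro rfl; exact hxy (hGQ.collinear_refl x)
  have hset : (perp inc x ∪ perp inc y)ᶜ ∩ (perp inc u ∩ perp inc v) =
      ((perp inc u ∩ perp inc v).erase x).erase y := by
    ext z
    simp only [mem_inter, mem_compl, mem_union, mem_perp, not_or, mem_erase]
    constructor
    · rintro ⟨⟨hzx, hzy⟩, hzu, hzv⟩
      refine ⟨?_, ?_, hzu, hzv⟩
      · rintro rfl; exact hzy (hGQ.collinear_refl z)
      · rintro rfl; exact hzx (hGQ.collinear_refl z)
    · rintro ⟨hzy, hzx, hzu, hzv⟩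
      simp only [mem_inter, mem_perp] at hx hy
      exact ⟨⟨hGQ.not_collinear_of_collinear_of_collinear hnuv hzu hzv hx.1 hx.2 hzx,
        hGQ.not_collinear_of_collinear_of_collinear hnuv hzu hzv hy.1 hy.2 hzy⟩, hzu, hzv⟩
  rw [hset, card_erase_of_mem (mem_erase.2 ⟨hxy'.symm, hy⟩), card_erase_of_mem hx,
    card_perp_inter_perp hGQ hnuv]
  omega

theorem exists_not_collinear (hGQ : IsGenQuadrangle inc s t) (hs : 0 < s) (ht : 0 < t)
    (x : P) : ∃ y, ¬ Collinear inc x y := by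
  obtain ⟨m, -⟩ := hGQ.exists_inc x
  have hlt : #(perp inc x) < #(univ : Finset P) := by
    rw [card_perp hGQ, card_univ, hGQ.card_points m]
    nlinarith [Nat.mul_pos (Nat.mul_pos hs hs) ht]
  obtain ⟨y, -, hy⟩ := exists_mem_notMem_of_card_lt_card hlt
  exact ⟨y, fun hxy => hy (mem_perp.2 hxy.symm)⟩

end

/-- `N`, `(t + 1) (t - 1) s` and `(t + 1) ((t - 1) s + t (t - 1))` are, for two noncollinear
points `x, y`, the number of points collinear with neither of them and the sum and the sum of
squares of their numbers of neighbours in `{x, y}ᗮ`. -/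
theorem le_sq_of_variance_nonneg {s t N : ℕ} (hs : 1 < s) (ht : 2 ≤ t)
    (hN : N + 2 * ((t + 1) * s + 1) = (s + 1) * (s * t + 1) + (t + 1))
    (hCS : ((t + 1) * ((t - 1) * s)) ^ 2 ≤
      N * ((t + 1) * ((t - 1) * s + t * (t - 1)))) :
    t ≤ s ^ 2 := by
  obtain ⟨r, rfl⟩ : ∃ r, t = r + 1 := ⟨t - 1, by omega⟩
  simp only [Nat.add_sub_cancel] at hCS
  by_contra! hlt
  have hNz : (N : ℤ) = s ^ 2 * (r + 1) - s * (r + 1) - s + (r + 1) := by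
    have h := congrArg (Nat.cast : ℕ → ℤ) hN
    push_cast at h
    linear_combination h
  have hCSz : (((r + 2) * (r * s)) ^ 2 : ℤ) ≤ N * ((r + 2) * (r * s + (r + 1) * r)) := by
    exact_mod_cast hCS
  have hpos : (0 : ℤ) < r * (r + 2) * (r + 1) * (s - 1) := by
    have hr : (0 : ℤ) < r := by exact_mod_cast (by omega : 0 < r)
    have hs' : (0 : ℤ) < s - 1 := by linarith [(by exact_mod_cast hs : (1 : ℤ) < s)]
    positivity
  have hneg : (s : ℤ) ^ 2 - (r + 1) < 0 := by
    have : ((s ^ 2 : ℕ) : ℤ) < ((r + 1 : ℕ) : ℤ) := by exact_mod_cast hlt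
    push_cast at this
    linarith
  -- variance identity: `N · Σ d² - (Σ d)² = (t² - 1) t (s - 1) (s² - t)`
  have hvar : (N : ℤ) * ((r + 2) * (r * s + (r + 1) * r)) - ((r + 2) * (r * s)) ^ 2 =
      r * (r + 2) * (r + 1) * (s - 1) * (s ^ 2 - (r + 1)) := by
    rw [hNz]; ring
  nlinarith [mul_neg_of_pos_of_neg hpos hneg]

/-- **Higman's inequality**, via the variance of `z ↦ #(zᗮ ∩ {x, y}ᗮ)` over the points `z`
collinear with neither of two noncollinear points `x, y`. -/
theorem le_sq [Finite P] [Finite L] [Nonempty P] (hGQ : IsGenQuadrangle inc s t) (hs : 1 < s) :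
    t ≤ s ^ 2 := by
  cases nonempty_fintype P
  cases nonempty_fintype L
  rcases le_or_gt t 1 with ht | ht
  · nlinarith
  obtain ⟨x⟩ := ‹Nonempty P›
  obtain ⟨y, hxy⟩ := hGQ.exists_not_collinear (by omega) (by omega) x
  set F := perp inc x ∩ perp inc y
  set T := (perp inc x ∪ perp inc y)ᶜ
  have hsum : ∑ z ∈ T, #(F.bipartiteAbove (Collinear inc) z) = (t + 1) * ((t - 1) * s) := by
    rw [sum_card_bipartiteAbove_eq_sum_card_bipartiteBelow, sum_congr rfl fun u hu => by
      rw [bipartiteBelow_collinear, card_compl_perp_union_perp_inter_perp hGQ hxy hu],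
      sum_const_nat fun _ _ => rfl, card_perp_inter_perp hGQ hxy]
  have hsum_sq : ∑ z ∈ T, #(F.bipartiteAbove (Collinear inc) z) ^ 2 =
      (t + 1) * ((t - 1) * s + t * (t - 1)) := by
    rw [sum_sq_card_bipartiteAbove, ← card_perp_inter_perp hGQ hxy, ← smul_eq_mul,
      ← sum_const]
    refine sum_congr rfl fun u hu => ?_
    -- the term `v = u` contributes `(t - 1) s`, each of the other `t` terms `t - 1`
    simp only [bipartiteBelow_collinear, ← inter_inter_distrib_left]
    rw [← add_sum_erase F _ hu, inter_self,
      card_compl_perp_union_perp_inter_perp hGQ hxy hu, sum_congr rfl fun v hv =>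
        card_compl_perp_union_perp_inter_perp_inter_perp hGQ hxy hu (mem_of_mem_erase hv)
          (ne_of_mem_erase hv).symm,
      sum_const_nat fun _ _ => rfl, card_erase_of_mem hu, card_perp_inter_perp hGQ hxy,
      Nat.add_sub_cancel]
  have hCS := sq_sum_le_card_mul_sum_sq (s := T)
    (f := fun z => #(F.bipartiteAbove (Collinear inc) z))
  rw [hsum, hsum_sq] at hCS
  exact le_sq_of_variance_nonneg hs ht (hGQ.card_compl_perp_union_perp hxy) hCS

end Counting

theorem natCard_points [Finite P] [Finite L] [Nonempty L] (hGQ : IsGenQuadrangle inc s t) :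
    Nat.card P = (s + 1) * (s * t + 1) := by
  cases nonempty_fintype P
  cases nonempty_fintype L
  rw [Nat.card_eq_fintype_card, hGQ.card_points (Classical.arbitrary L)]

theorem natCard_lines_pow_three_lt [Finite P] [Finite L] [Nonempty P] [Nonempty L]
    (hGQ : IsGenQuadrangle inc s t) (hs : 1 < s) : Nat.card L ^ 3 < Nat.card P ^ 4 := by
  rw [hGQ.natCard_points, hGQ.dual.natCard_points]
  exact Nat.pow_three_lt_pow_four_of_le_sq (by omega) (hGQ.le_sq hs)

end IsGenQuadrangle

theorem stmt11_general {P L : Type*} [Finite P] [Finite L] {inc : P → L → Prop} {s t : ℕ}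
    (hGQ : IsGenQuadrangle inc s t) (hs : 2 ≤ s) (ht : 2 ≤ t)
    (G : Type*) [Group G] [Finite G] [MulAction G P] [MulAction G L]
    (htransP : MulAction.IsPretransitive G P)
    (htransL : MulAction.IsPretransitive G L)
    (α : P) (ℓ : L) :
    Nat.card (MulAction.stabilizer G α) ^ 4 <
        Nat.card (MulAction.stabilizer G ℓ) ^ 3 * Nat.card G ∧
    Nat.card (MulAction.stabilizer G ℓ) ^ 4 <
        Nat.card (MulAction.stabilizer G α) ^ 3 * Nat.card G := by
  have : Nonempty P := ⟨α⟩
  have : Nonempty L := ⟨ℓ⟩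
  have hα := MulAction.natCard_mul_natCard_stabilizer (G := G) α
  have hℓ := MulAction.natCard_mul_natCard_stabilizer (G := G) ℓ
  exact ⟨Nat.pow_four_lt_pow_three_mul_of_mul_eq hα hℓ (hGQ.natCard_lines_pow_three_lt hs)
      Nat.card_pos,
    Nat.pow_four_lt_pow_three_mul_of_mul_eq hℓ hα (hGQ.dual.natCard_lines_pow_three_lt ht)
      Nat.card_pos⟩

/-- If a finite group `G` acts by automorphisms on a finite thick GQ, transitively on
points and on lines, then the point and line stabilizers satisfy
`|G_α|⁴ < |G_ℓ|³ · |G|` and `|G_ℓ|⁴ < |G_α|³ · |G|`. -/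
theorem stmt11 {P L : Type*} [Finite P] [Finite L] {inc : P → L → Prop} {s t : ℕ}
    (hGQ : IsGenQuadrangle inc s t) (hs : 2 ≤ s) (ht : 2 ≤ t)
    (G : Type*) [Group G] [Finite G] [MulAction G P] [MulAction G L]
    (hinc : ∀ (g : G) (x : P) (ℓ : L), inc (g • x) (g • ℓ) ↔ inc x ℓ)
    (htransP : MulAction.IsPretransitive G P)
    (htransL : MulAction.IsPretransitive G L)
    (α : P) (ℓ : L) :
    Nat.card (MulAction.stabilizer G α) ^ 4 <
        Nat.card (MulAction.stabilizer G ℓ) ^ 3 * Nat.card G ∧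
    Nat.card (MulAction.stabilizer G ℓ) ^ 4 <
        Nat.card (MulAction.stabilizer G α) ^ 3 * Nat.card G :=
  stmt11_general hGQ hs ht G htransP htransL α ℓ
end

section
/- There do not exist an odd prime power q ≥ 13 and an integer s ≥ 2 such that 2(s+1)(s²+1) = q(q+1). -/
/-!
Since `gcd(s + 1, s² + 1)` divides `2`, the odd prime power `q` divides `s + 1` or `s² + 1`.
The first is too small: `q ≤ s + 1` forces `q(q + 1) < 2(s + 1)(s² + 1)`. In the second,
write `s² + 1 = qk`; cancelling `q` gives `2(s + 1)k = q + 1`, and eliminating `q` leaves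
`s(s - 2k²) = (2k + 1)(k - 1)`, whose only solution with `s, k ≥ 1` is `k = 1`, `s = 2`,
hence `q = 5`.
-/

theorem Nat.Prime.pow_dvd_or_pow_dvd_of_dvd_mul {p a b : ℕ} (hp : p.Prime)
    (hab : ¬(p ∣ a ∧ p ∣ b)) (f : ℕ) (h : p ^ f ∣ a * b) :
    p ^ f ∣ a ∨ p ^ f ∣ b := by
  by_cases ha : p ∣ a
  · have hb : ¬p ∣ b := fun hb => hab ⟨ha, hb⟩
    exact .inl <| ((hp.coprime_iff_not_dvd.mpr hb).pow_left f).dvd_of_dvd_mul_right h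
  · exact .inr <| ((hp.coprime_iff_not_dvd.mpr ha).pow_left f).dvd_of_dvd_mul_left h

theorem Nat.Prime.not_dvd_add_one_and_sq_add_one {p : ℕ} (hp : p.Prime) (hodd : Odd p) (s : ℕ) :
    ¬(p ∣ s + 1 ∧ p ∣ s ^ 2 + 1) := by
  rintro ⟨h₁, h₂⟩
  have h2 : (p : ℤ) ∣ 2 := by
    rw [show (2 : ℤ) = (s ^ 2 + 1) - (s + 1) * (s - 1) by ring]
    exact (Int.natCast_dvd_natCast.mpr h₂).sub ((Int.natCast_dvd_natCast.mpr h₁).mul_right _)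
  obtain rfl : p = 2 := (Nat.prime_dvd_prime_iff_eq hp Nat.prime_two).mp (by exact_mod_cast h2)
  exact absurd hodd (by decide)

theorem not_dvd_add_one_of_two_mul_eq {q s : ℕ} (hs : 1 ≤ s)
    (h : 2 * (s + 1) * (s ^ 2 + 1) = q * (q + 1)) : ¬q ∣ s + 1 := by
  intro hq
  have hle : q ≤ s + 1 := Nat.le_of_dvd (by omega) hq
  have : q * (q + 1) ≤ (s + 1) * (s + 2) := Nat.mul_le_mul hle (by omega)
  nlinarith

theorem Int.eq_one_and_eq_two_of_sq_add_one_add_eq {k s : ℤ} (hk : 1 ≤ k) (hs : 1 ≤ s)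
    (h : s ^ 2 + 1 + k = 2 * k ^ 2 * (s + 1)) : k = 1 ∧ s = 2 := by
  have hfac : s * (s - 2 * k ^ 2) = (2 * k + 1) * (k - 1) := by linear_combination h
  have hrhs : 0 ≤ (2 * k + 1) * (k - 1) := by nlinarith
  have hge : 2 * k ^ 2 ≤ s := by
    by_contra! hlt
    nlinarith [mul_pos (by omega : 0 < s) (sub_pos.mpr hlt)]
  have hle : s ≤ 2 * k ^ 2 := by
    by_contra! hgt
    nlinarith [mul_le_mul_of_nonneg_left (by omega : 1 ≤ s - 2 * k ^ 2) (by omega : 0 ≤ s)]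
  have hs' : s = 2 * k ^ 2 := le_antisymm hle hge
  have hk' : k = 1 := by nlinarith
  exact ⟨hk', by rw [hs', hk']; norm_num⟩

theorem eq_five_of_dvd_sq_add_one_of_two_mul_eq {q s : ℕ} (hs : 1 ≤ s) (hq : q ∣ s ^ 2 + 1)
    (h : 2 * (s + 1) * (s ^ 2 + 1) = q * (q + 1)) : q = 5 := by
  obtain ⟨k, hk⟩ := hq
  have hq0 : 0 < q := Nat.pos_of_ne_zero (by rintro rfl; simp at hk)
  have hk1 : 1 ≤ k := Nat.pos_of_ne_zero (by rintro rfl; simp at hk)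
  have hqk : 2 * (s + 1) * k = q + 1 :=
    Nat.eq_of_mul_eq_mul_left hq0 (by rw [← h, hk]; ring)
  have key : (s : ℤ) ^ 2 + 1 + k = 2 * k ^ 2 * ((s : ℤ) + 1) := by
    have hk' : (s : ℤ) ^ 2 + 1 = q * k := by exact_mod_cast hk
    have hqk' : 2 * ((s : ℤ) + 1) * k = q + 1 := by exact_mod_cast hqk
    linear_combination hk' - k * hqk'
  obtain ⟨-, hs₂⟩ :=
    Int.eq_one_and_eq_two_of_sq_add_one_add_eq (by exact_mod_cast hk1) (by exact_mod_cast hs) key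
  obtain rfl : s = 2 := by exact_mod_cast hs₂
  nlinarith

/-- There are no odd prime power `q ≥ 13` and integer `s ≥ 2` with
`2(s+1)(s²+1) = q(q+1)`. -/
theorem stmt14 : ¬ ∃ p f q s : ℕ, p.Prime ∧ Odd p ∧ 1 ≤ f ∧ q = p ^ f ∧ 13 ≤ q ∧
    2 ≤ s ∧ 2 * (s + 1) * (s ^ 2 + 1) = q * (q + 1) := by
  rintro ⟨p, f, q, s, hp, hodd, -, rfl, h13, hs, h⟩
  have hdvd : p ^ f ∣ (s + 1) * (s ^ 2 + 1) :=
    (hodd.pow.coprime_two_right).dvd_of_dvd_mul_left ⟨p ^ f + 1, by rw [← mul_assoc, h]⟩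
  rcases hp.pow_dvd_or_pow_dvd_of_dvd_mul (hp.not_dvd_add_one_and_sq_add_one hodd s) f hdvd with
    hq | hq
  · exact not_dvd_add_one_of_two_mul_eq (by omega) h hq
  · have := eq_five_of_dvd_sq_add_one_of_two_mul_eq (by omega) hq h
    omega
end

section
/- For every integer f ≥ 2, there is no integer s ≥ 2 such that (s+1)(s²+1) = 2^{f−1}·(2^f + 1). -/
/-!
The right side is even, so `s = 2k + 1` is odd and `(s + 1)(s² + 1) = 4(k + 1)(2k² + 2k + 1)`
with the last factor odd. For `f = 2` the right side `10` is not divisible by `4`. For `f = n + 3`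
the equation becomes `(k + 1)(2k² + 2k + 1) = a(8a + 1)` with `a = 2ⁿ`, so `a` divides `k + 1`.
Writing `k + 1 = a m`, the left side of `m(2k² + 2k + 1) = 8a + 1` is too large unless `m = 1`,
which forces `k = 4` and `a = 5`, not a power of two.
-/

lemma even_add_one_mul_sq_add_one_iff (s : ℕ) : Even ((s + 1) * (s ^ 2 + 1)) ↔ Odd s := by
  simp [Nat.even_mul, Nat.even_add_one, Nat.even_pow]

lemma eq_four_and_five_of_add_one_mul_eq {k a : ℕ} (hdvd : a ∣ k + 1)
    (heq : (k + 1) * (2 * k ^ 2 + 2 * k + 1) = a * (8 * a + 1)) : k = 4 ∧ a = 5 := by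
  obtain ⟨m, hm⟩ := hdvd
  have ha : 0 < a := Nat.pos_of_ne_zero fun h => by simp [h] at hm
  have hquot : m * (2 * k ^ 2 + 2 * k + 1) = 8 * a + 1 :=
    Nat.eq_of_mul_eq_mul_left ha (by rw [← heq, hm]; ring)
  obtain rfl | rfl | hm2 : m = 0 ∨ m = 1 ∨ 2 ≤ m := by omega
  · simp at hquot
  · have hk : k = 4 := by nlinarith
    omega
  · have hka : 2 * a ≤ k + 1 := by rw [hm, mul_comm 2]; exact Nat.mul_le_mul_left a hm2
    nlinarith

lemma add_one_mul_ne_two_pow_mul (k n : ℕ) :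
    (k + 1) * (2 * k ^ 2 + 2 * k + 1) ≠ 2 ^ n * (8 * 2 ^ n + 1) := by
  intro heq
  have hcop : Nat.Coprime (2 ^ n) (2 * k ^ 2 + 2 * k + 1) :=
    Nat.Coprime.pow_left _ (Nat.coprime_two_left.mpr ⟨k ^ 2 + k, by ring⟩)
  have hdvd : 2 ^ n ∣ k + 1 := hcop.dvd_of_dvd_mul_right (heq ▸ dvd_mul_right _ _)
  have hfive : 5 ∣ 2 ^ n := (eq_four_and_five_of_add_one_mul_eq hdvd heq).2 ▸ dvd_rfl
  have hfive_two : 5 ∣ 2 := Nat.prime_five.dvd_of_dvd_pow hfive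
  omega

/-- For every integer `f ≥ 2` there is no integer `s ≥ 2` with
`(s+1)(s²+1) = 2^(f-1) · (2^f + 1)`. -/
theorem stmt15 : ∀ f : ℕ, 2 ≤ f →
    ¬ ∃ s : ℕ, 2 ≤ s ∧ (s + 1) * (s ^ 2 + 1) = 2 ^ (f - 1) * (2 ^ f + 1) := by
  rintro f hf ⟨s, -, heq⟩
  have hodd : Odd s := by
    rw [← even_add_one_mul_sq_add_one_iff, heq]
    exact (Nat.even_pow.mpr ⟨even_two, by omega⟩).mul_right _
  obtain ⟨k, rfl⟩ := hodd
  have hlhs : (2 * k + 1 + 1) * ((2 * k + 1) ^ 2 + 1)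
      = 4 * ((k + 1) * (2 * k ^ 2 + 2 * k + 1)) := by ring
  obtain rfl | ⟨n, rfl⟩ : f = 2 ∨ ∃ n, f = n + 3 := by
    by_cases h : f = 2
    exacts [.inl h, .inr ⟨f - 3, by omega⟩]
  · omega
  · have hrhs : 2 ^ (n + 3 - 1) * (2 ^ (n + 3) + 1) = 4 * (2 ^ n * (8 * 2 ^ n + 1)) := by
      rw [show n + 3 - 1 = n + 2 by omega]; ring
    exact add_one_mul_ne_two_pow_mul k n (by omega)
end

section
/- Let q be an odd prime power and let s ≥ 2 be an integer such that 2(s+1)(s²+1) = q(q−1). Then s = 9 and q = 41. -/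
/-!
Since `q` is odd and `gcd(s + 1, s² + 1) ∣ 2`, the odd prime power `q` divides `s + 1` or
`s² + 1`. The first is too small to give `q(q - 1) = 2(s + 1)(s² + 1)`. In the second, writing
`s² + 1 = qm` turns the equation into `q = 2(s + 1)m + 1`, so `s² + 1 = (2(s + 1)m + 1)m`, a
quadratic in `s` whose discriminant is a square only for `m = 2`, giving `s = 9`, `q = 41`.
-/

lemma Int.not_sq_lt_sq_lt_succ_sq {n t : ℤ} (hn : 0 ≤ n) (h₁ : n ^ 2 < t ^ 2)
    (h₂ : t ^ 2 < (n + 1) ^ 2) : False := by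
  rw [sq_lt_sq, abs_of_nonneg hn] at h₁
  rw [sq_lt_sq, abs_of_nonneg (by omega : 0 ≤ n + 1)] at h₂
  omega

/-- Completing the square, `(s - m²)² = m⁴ + 2m² + m - 1`, which for `m ≥ 3` lies strictly
between `(m² + 1)²` and `(m² + 2)²`. -/
lemma eq_nine_and_eq_two_of_sq_add_one_eq {s m : ℕ} (h : s ^ 2 + 1 = (2 * (s + 1) * m + 1) * m) :
    s = 9 ∧ m = 2 := by
  have hZ : (s : ℤ) ^ 2 + 1 = (2 * (s + 1) * m + 1) * m := by exact_mod_cast h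
  have hT : ((s : ℤ) - m ^ 2) ^ 2 = m ^ 4 + 2 * m ^ 2 + m - 1 := by linear_combination hZ
  rcases le_or_gt 3 m with hm | hm
  · have hm' : (3 : ℤ) ≤ m := by exact_mod_cast hm
    exact (Int.not_sq_lt_sq_lt_succ_sq (n := (m : ℤ) ^ 2 + 1) (by positivity)
      (by rw [hT]; nlinarith) (by rw [hT]; nlinarith)).elim
  interval_cases m
  · simp at h
  · exact (Int.not_sq_lt_sq_lt_succ_sq (n := 1) one_pos.le (by rw [hT]; norm_num)
      (by rw [hT]; norm_num)).elim
  · have : ((s : ℤ) - 9) * (s + 1) = 0 := by linear_combination hT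
    rcases mul_eq_zero.mp this with h9 | hneg
    · exact ⟨by omega, rfl⟩
    · omega

lemma dvd_two_of_dvd_add_one_of_dvd_sq_add_one {d s : ℕ} (h₁ : d ∣ s + 1) (h₂ : d ∣ s ^ 2 + 1) :
    d ∣ 2 := by
  have : d ∣ (s + 1) ^ 2 + 2 := by
    rw [show (s + 1) ^ 2 + 2 = s ^ 2 + 1 + 2 * (s + 1) by ring]
    exact dvd_add h₂ (dvd_mul_of_dvd_right h₁ 2)
  exact (Nat.dvd_add_right (dvd_pow h₁ two_ne_zero)).mp this

lemma pow_dvd_add_one_or_pow_dvd_sq_add_one {p s : ℕ} (hp : p.Prime) (hodd : Odd p) (f : ℕ)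
    (h : p ^ f ∣ (s + 1) * (s ^ 2 + 1)) : p ^ f ∣ s + 1 ∨ p ^ f ∣ s ^ 2 + 1 := by
  by_cases hps : p ∣ s + 1
  · refine .inl (hp.prime.pow_dvd_of_dvd_mul_right f (fun hps' => ?_) h)
    have hle := Nat.le_of_dvd two_pos (dvd_two_of_dvd_add_one_of_dvd_sq_add_one hps hps')
    have hge := hp.two_le
    obtain rfl : p = 2 := by omega
    exact absurd hodd (by decide)
  · exact .inr (hp.prime.pow_dvd_of_dvd_mul_left f hps h)

lemma mul_pred_lt_of_dvd_add_one {q s : ℕ} (hq : q ∣ s + 1) :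
    q * (q - 1) < 2 * (s + 1) * (s ^ 2 + 1) := by
  have hle := Nat.le_of_dvd s.succ_pos hq
  calc q * (q - 1) ≤ (s + 1) * s := Nat.mul_le_mul hle (by omega)
    _ < 2 * (s + 1) * (s ^ 2 + 1) := by nlinarith

lemma eq_nine_and_eq_fortyone_of_dvd_sq_add_one {q s : ℕ} (hq : q ∣ s ^ 2 + 1)
    (h : 2 * (s + 1) * (s ^ 2 + 1) = q * (q - 1)) : s = 9 ∧ q = 41 := by
  obtain ⟨m, hm⟩ := hq
  have hq0 : 0 < q := Nat.pos_of_ne_zero (by rintro rfl; simp at hm)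
  have hq' : q = 2 * (s + 1) * m + 1 := by
    have : q * (2 * (s + 1) * m) = q * (q - 1) := by rw [← h, hm]; ring
    have := Nat.eq_of_mul_eq_mul_left hq0 this
    omega
  obtain ⟨rfl, rfl⟩ := eq_nine_and_eq_two_of_sq_add_one_eq (hq' ▸ hm)
  exact ⟨rfl, hq'⟩

theorem stmt16_general (p f q s : ℕ) (hp : p.Prime) (hodd : Odd p) (hq : q = p ^ f)
    (h : 2 * (s + 1) * (s ^ 2 + 1) = q * (q - 1)) :
    s = 9 ∧ q = 41 := by
  have hdvd : q ∣ (s + 1) * (s ^ 2 + 1) := by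
    have hq2 : Nat.Coprime q 2 := hq ▸ hodd.pow.coprime_two_right
    exact hq2.dvd_of_dvd_mul_left ⟨q - 1, by rw [← h]; ring⟩
  subst hq
  rcases pow_dvd_add_one_or_pow_dvd_sq_add_one hp hodd f hdvd with h₁ | h₂
  · exact absurd h (mul_pred_lt_of_dvd_add_one h₁).ne'
  · exact eq_nine_and_eq_fortyone_of_dvd_sq_add_one h₂ h

/-- If `q` is an odd prime power and `s ≥ 2` satisfies `2(s+1)(s²+1) = q(q-1)`, then
`s = 9` and `q = 41`. -/
theorem stmt16 (p f q s : ℕ) (hp : p.Prime) (hodd : Odd p) (hf : 1 ≤ f) (hq : q = p ^ f)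
    (hs : 2 ≤ s) (h : 2 * (s + 1) * (s ^ 2 + 1) = q * (q - 1)) :
    s = 9 ∧ q = 41 :=
  stmt16_general p f q s hp hodd hq h
end

section
/- Let p ≥ 7 be a prime, let f ≥ 1 be an integer, set q = p^f, and let s ≥ 2 be an integer such that 120(s+1)(s²+1) = q(q²−1). Then p ≡ 1 (mod 4). -/
/-! Since `p ∤ 120`, the prime power `q` divides `(s + 1)(s² + 1)`. If `p ∣ s² + 1`, then `-1` is a
square modulo `p`, so `p ≡ 1 (mod 4)`. Otherwise `q ∣ s + 1`, hence `q ≤ s + 1`, and then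
`q(q² - 1) < (s + 1)³ < 120(s + 1)(s² + 1)`, contradicting the equation. -/

theorem Nat.Prime.mod_four_eq_one_of_dvd_sq_add_one {p n : ℕ} (hp : p.Prime) (hp2 : p ≠ 2)
    (h : p ∣ n ^ 2 + 1) : p % 4 = 1 := by
  have : Fact p.Prime := ⟨hp⟩
  have hsq : (n : ZMod p) ^ 2 = -1 := by
    have h0 : ((n ^ 2 + 1 : ℕ) : ZMod p) = 0 := (ZMod.natCast_eq_zero_iff _ _).mpr h
    push_cast at h0
    linear_combination h0
  have hne3 := ZMod.mod_four_ne_three_of_sq_eq_neg_one hsq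
  have hodd := (hp.mod_two_eq_one_iff_ne_two).mpr hp2
  omega

theorem Nat.Prime.not_dvd_120_of_seven_le {p : ℕ} (hp : p.Prime) (hp7 : 7 ≤ p) : ¬ p ∣ 120 := by
  intro hdvd
  have hmem : p ∈ Nat.primeFactors 120 := Nat.mem_primeFactors.mpr ⟨hp, hdvd, by norm_num⟩
  have h120 : Nat.primeFactors 120 = {2, 3, 5} := by simp [← Nat.toFinset_factors]
  simp only [h120, Finset.mem_insert, Finset.mem_singleton] at hmem
  omega

theorem mul_sq_sub_one_lt_of_le_succ {q s : ℕ} (hq : q ≤ s + 1) :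
    q * (q ^ 2 - 1) < 120 * (s + 1) * (s ^ 2 + 1) :=
  calc q * (q ^ 2 - 1) ≤ (s + 1) * (s + 1) ^ 2 :=
        Nat.mul_le_mul hq ((Nat.sub_le _ _).trans (Nat.pow_le_pow_left hq 2))
    _ < 120 * (s + 1) * (s ^ 2 + 1) := by nlinarith

theorem stmt17_general (p f q s : ℕ) (hp : p.Prime) (hp7 : 7 ≤ p) (hq : q = p ^ f)
    (h : 120 * (s + 1) * (s ^ 2 + 1) = q * (q ^ 2 - 1)) :
    p % 4 = 1 := by
  by_cases hp_dvd : p ∣ s ^ 2 + 1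
  · exact hp.mod_four_eq_one_of_dvd_sq_add_one (by omega) hp_dvd
  exfalso
  have hcop : Nat.Coprime q (120 * (s ^ 2 + 1)) := hq ▸ Nat.Coprime.pow_left _
    (Nat.Coprime.mul_right ((hp.coprime_iff_not_dvd).mpr (hp.not_dvd_120_of_seven_le hp7))
      ((hp.coprime_iff_not_dvd).mpr hp_dvd))
  have hdvd : q ∣ 120 * (s ^ 2 + 1) * (s + 1) := Dvd.intro _ (by rw [← h]; ring)
  have hle : q ≤ s + 1 := Nat.le_of_dvd s.succ_pos (hcop.dvd_of_dvd_mul_left hdvd)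
  exact (mul_sq_sub_one_lt_of_le_succ hle).ne' h

/-- If `p ≥ 7` is prime, `q = p ^ f` with `f ≥ 1`, and `s ≥ 2` satisfies
`120(s+1)(s²+1) = q(q²-1)`, then `p ≡ 1 (mod 4)`. -/
theorem stmt17 (p f q s : ℕ) (hp : p.Prime) (hp7 : 7 ≤ p) (hf : 1 ≤ f) (hq : q = p ^ f)
    (hs : 2 ≤ s) (h : 120 * (s + 1) * (s ^ 2 + 1) = q * (q ^ 2 - 1)) :
    p % 4 = 1 :=
  stmt17_general p f q s hp hp7 hq h
end

section
/- Let e ≥ 2 be an integer and let r be a prime. Then there is no integer s ≥ 2 such that (2^{2e} − 1)(s+1)(s²+1) = 2^{e(r−1)}·(2^{2er} − 1). -/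
/-!
With `X = 2^(2e)` and `N = 2^(e(r-1))`, cancelling `X - 1` turns the equation into
`(s+1)(s²+1) = N·T` with `T = 1 + X + ⋯ + X^(r-1)`, and `N² < T < (16/15)·N²`.
Since `4 ∤ s² + 1`, `N/2` divides `s + 1`. On the other hand `(s+1)(s²+1)` lies between `s³`
and `(s+1)³`, which forces `N < s + 1 < 3N/2`: there is no multiple of `N/2` in that range.
-/

open Finset

lemma two_pow_dvd_of_two_pow_succ_dvd_mul_sq_add_one {a s n : ℕ}
    (h : 2 ^ (n + 1) ∣ a * (s ^ 2 + 1)) : 2 ^ n ∣ a := by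
  rcases eq_or_ne a 0 with rfl | ha
  · exact dvd_zero _
  have hs : s ^ 2 + 1 ≠ 0 := by positivity
  have hfour : ¬ 2 ^ 2 ∣ s ^ 2 + 1 := by
    rw [Nat.dvd_iff_mod_eq_zero, Nat.add_mod, Nat.pow_mod]
    have : s % 4 < 4 := Nat.mod_lt _ (by norm_num)
    interval_cases s % 4 <;> norm_num
  have hval : padicValNat 2 (s ^ 2 + 1) ≤ 1 := by
    by_contra! hlt
    exact hfour ((padicValNat_dvd_iff_le hs).mpr hlt)
  rw [padicValNat_dvd_iff_le (mul_ne_zero ha hs), padicValNat.mul ha hs] at h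
  exact (padicValNat_dvd_iff_le ha).mpr (by omega)

lemma pow_lt_geom_sum_succ {x q : ℕ} (hq : q ≠ 0) :
    x ^ q < ∑ i ∈ range (q + 1), x ^ i := by
  rw [sum_range_succ, lt_add_iff_pos_left]
  exact sum_pos' (fun _ _ ↦ Nat.zero_le _) ⟨0, mem_range.mpr (Nat.pos_of_ne_zero hq), by simp⟩

lemma geom_sum_succ_lt {x q : ℕ} (hx : 16 ≤ x) :
    15 * ∑ i ∈ range (q + 1), x ^ i < 16 * x ^ q := by
  have hgeom := geom_sum_mul_of_one_le (by omega : 1 ≤ x) q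
  have hpos : 0 < x ^ q := by positivity
  have : 15 * ∑ i ∈ range q, x ^ i ≤ (∑ i ∈ range q, x ^ i) * (x - 1) := by
    rw [mul_comm]; exact Nat.mul_le_mul_left _ (by omega)
  rw [sum_range_succ]
  omega

lemma succ_mul_sq_add_one_ne_two_mul_mul {s h T : ℕ} (hh : 2 ≤ h) (hdvd : h ∣ s + 1)
    (hlow : 4 * h ^ 2 < T) (hup : 15 * T < 64 * h ^ 2) :
    (s + 1) * (s ^ 2 + 1) ≠ 2 * h * T := by
  intro heq
  obtain ⟨k, hk⟩ := hdvd
  have hk3 : 3 ≤ k := by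
    by_contra! hk2
    have hs : s + 1 ≤ 2 * h := by rw [hk, mul_comm]; exact Nat.mul_le_mul_right h (by omega)
    have : (s + 1) * (s ^ 2 + 1) ≤ (2 * h) ^ 3 := by
      calc (s + 1) * (s ^ 2 + 1) ≤ (s + 1) ^ 3 := by nlinarith
        _ ≤ (2 * h) ^ 3 := Nat.pow_le_pow_left hs 3
    nlinarith
  have hs : 5 * h ≤ 2 * s := by
    have : 3 * h ≤ h * k := by rw [mul_comm h]; exact Nat.mul_le_mul_right h hk3
    omega
  have hcube : (5 * h) ^ 3 ≤ (2 * s) ^ 3 := Nat.pow_le_pow_left hs 3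
  have : 15 * s ^ 3 < 128 * h ^ 3 := by nlinarith
  nlinarith

/-- For every integer `e ≥ 2` and prime `r`, there is no integer `s ≥ 2` with
`(2^(2e) - 1)(s+1)(s²+1) = 2^(e(r-1)) · (2^(2er) - 1)`. -/
theorem stmt19 (e : ℕ) (he : 2 ≤ e) (r : ℕ) (hr : r.Prime) :
    ¬ ∃ s : ℕ, 2 ≤ s ∧ (2 ^ (2 * e) - 1) * (s + 1) * (s ^ 2 + 1) =
      2 ^ (e * (r - 1)) * (2 ^ (2 * e * r) - 1) := by
  rintro ⟨s, -, heq⟩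
  obtain ⟨q, rfl⟩ : ∃ q, r = q + 1 := ⟨r - 1, by have := hr.two_le; omega⟩
  have hq : q ≠ 0 := by have := hr.two_le; omega
  have hm : 2 ≤ e * q := le_trans he (Nat.le_mul_of_pos_right e (Nat.pos_of_ne_zero hq))
  obtain ⟨n, hn, hnq⟩ : ∃ n, 1 ≤ n ∧ e * q = n + 1 := ⟨e * q - 1, by omega, by omega⟩
  set X := 2 ^ (2 * e) with hX
  set T := ∑ i ∈ range (q + 1), X ^ i
  have hXq : X ^ q = 4 * (2 ^ n) ^ 2 := by
    rw [hX, ← pow_mul, ← pow_mul, mul_assoc, hnq]; ring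
  have hX16 : 16 ≤ X := by
    calc 16 = 2 ^ 4 := rfl
      _ ≤ X := Nat.pow_le_pow_right (by norm_num) (by omega)
  have key : (s + 1) * (s ^ 2 + 1) = 2 * 2 ^ n * T := by
    apply Nat.eq_of_mul_eq_mul_left (show 0 < X - 1 by omega)
    have hXr : 2 ^ (2 * e * (q + 1)) = X ^ (q + 1) := pow_mul _ _ _
    rw [← mul_assoc, heq, Nat.add_sub_cancel, hnq, hXr,
      ← geom_sum_mul_of_one_le (by omega) (q + 1)]
    ring
  refine succ_mul_sq_add_one_ne_two_mul_mul (Nat.le_self_pow (by omega) 2) ?_ ?_ ?_ key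
  · refine two_pow_dvd_of_two_pow_succ_dvd_mul_sq_add_one (s := s) ?_
    rw [key, pow_succ']
    exact dvd_mul_right _ _
  · exact hXq ▸ pow_lt_geom_sum_succ hq
  · have := geom_sum_succ_lt (q := q) hX16
    omega
end
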